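/- arXiv:2312.13943 — 8 statements merged into one kernel-verified Lean document; each statement's English description precedes it below -/
import Mathlib

section
/- Let p, q be relatively prime integers with 1 ≤ p < q, and let c_d ∈ {0,1} be the binary digits of 2^{p/q}, i.e. 2^{p/q} = ∑_{d=0}^∞ c_d 2^{-d}. Then for every natural number l, the sum ∑_{0 ≤ m ≤ l} {2^{m+p/q}} equals the number of integers d with 0 ≤ d ≤ l such that ⌊2^{d+p/q}⌋ is odd, up to an error bounded by an absolute constant (in fact the difference is bounded by 2). -/
open scoped Classical

lemma fract_two_mul_key (x : ℝ) :
    (if Odd ⌊2*x⌋ then (1:ℝ) else 0) = 2 * Int.fract x - Int.fract (2*x) := by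
  have h2x : 2*x = ((2*⌊x⌋ : ℤ) : ℝ) + 2 * Int.fract x := by
    rw [Int.fract]; push_cast; ring
  have hfr := Int.fract_nonneg x
  have hfr' := Int.fract_lt_one x
  rw [h2x, Int.floor_intCast_add, Int.fract_intCast_add]
  by_cases h : Int.fract x < 1/2
  · have hb : ⌊2 * Int.fract x⌋ = 0 := by
      rw [Int.floor_eq_zero_iff]; constructor <;> [linarith; linarith]
    have hfe : Int.fract (2 * Int.fract x) = 2 * Int.fract x :=
      Int.fract_eq_self.mpr ⟨by linarith, by linarith⟩
    rw [hb, hfe]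
    simp [Int.even_mul, parity_simps]
  · push_neg at h
    have hb : ⌊2 * Int.fract x⌋ = 1 := by
      rw [Int.floor_eq_iff]; push_cast; constructor <;> linarith
    have hfe : Int.fract (2 * Int.fract x) = 2 * Int.fract x - 1 := by
      rw [Int.fract, hb]; push_cast; ring
    have hodd : Odd (2*⌊x⌋+1) := ⟨⌊x⌋, by ring⟩
    rw [hb, hfe, if_pos hodd]
    ring

lemma card_filter_cast (n : ℕ) (P : ℝ → Prop) [DecidablePred P]
    [DecidablePred fun m : ℕ => P (m:ℝ)] :
    ((((do let a ← Finset.range n; pure ((a:ℝ))) : Finset ℝ)).filter P).card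
      = ((Finset.range n).filter (fun m : ℕ => P (m:ℝ))).card := by
  have hinj : Function.Injective (fun a : ℕ => (a:ℝ)) := fun a b h => Nat.cast_injective h
  have hset : ((((do let a ← Finset.range n; pure ((a:ℝ))) : Finset ℝ)).filter P)
      = ((Finset.range n).filter (fun m : ℕ => P (m:ℝ))).image (fun a : ℕ => (a:ℝ)) := by
    ext x
    simp [Finset.mem_filter, Finset.bind_def, and_comm]
    aesop
  rw [hset, Finset.card_image_of_injective _ hinj]

/-- the sum of fractional parts of `2^(m+p/q)` for `0 ≤ m ≤ l` equals
the number of `0 ≤ d ≤ l` with `⌊2^(d+p/q)⌋` odd, up to an error bounded by 2. -/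
theorem stmt_0 (p q : ℤ) (hcop : IsCoprime p q) (hp : 1 ≤ p) (hpq : p < q)
    (c : ℕ → ℕ) (hc : ∀ d, c d ≤ 1)
    (hexp : (2 : ℝ) ^ ((p : ℝ) / (q : ℝ)) = ∑' d : ℕ, (c d : ℝ) / 2 ^ d) :
    ∀ l : ℕ,
      |(∑ m ∈ Finset.range (l + 1),
            Int.fract ((2 : ℝ) ^ ((m : ℝ) + (p : ℝ) / (q : ℝ)))) -
          (((Finset.range (l + 1)).filter
              (fun d => Odd ⌊(2 : ℝ) ^ ((d : ℝ) + (p : ℝ) / (q : ℝ))⌋)).card : ℝ)| ≤ 2 := by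
  intro l
  rw [card_filter_cast (l+1) (fun d => Odd ⌊(2 : ℝ) ^ (d + (p : ℝ) / (q : ℝ))⌋)]
  set α : ℝ := (2 : ℝ) ^ ((p : ℝ) / (q : ℝ)) with hα
  have hq0 : (0:ℝ) < (q:ℝ) := by exact_mod_cast lt_of_le_of_lt (by linarith) hpq
  have hr0 : 0 < (p:ℝ)/(q:ℝ) := div_pos (by exact_mod_cast hp) hq0
  have hr1 : (p:ℝ)/(q:ℝ) < 1 := (div_lt_one hq0).mpr (by exact_mod_cast hpq)
  have hα1 : 1 < α := Real.one_lt_rpow_iff_of_pos (by norm_num) |>.mpr (Or.inl ⟨by norm_num, hr0⟩)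
  have hα2 : α < 2 := by
    have := Real.rpow_lt_rpow_of_exponent_lt (x := (2:ℝ)) (by norm_num) hr1
    simpa using this
  set g : ℕ → ℝ := fun m => (2 : ℝ) ^ ((m : ℝ) + (p : ℝ) / (q : ℝ)) with hg
  have hsucc : ∀ m : ℕ, g (m+1) = 2 * g m := by
    intro m
    simp only [hg]
    rw [show ((m+1 : ℕ) : ℝ) + (p:ℝ)/(q:ℝ) = ((m:ℝ) + (p:ℝ)/(q:ℝ)) + 1 by push_cast; ring,
      Real.rpow_add (by norm_num)]
    ring
  have hg0 : g 0 = α := by simp [hg, hα]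
  have hcard : ∀ n : ℕ,
      (((Finset.range n).filter (fun d : ℕ => Odd ⌊g d⌋)).card : ℝ)
        = ∑ m ∈ Finset.range n, (if Odd ⌊g m⌋ then (1:ℝ) else 0) := by
    intro n
    rw [Finset.card_filter]
    push_cast
    rfl
  have key : ∀ n : ℕ,
      (∑ m ∈ Finset.range (n + 1), Int.fract (g m)) -
        (∑ m ∈ Finset.range (n+1), (if Odd ⌊g m⌋ then (1:ℝ) else 0))
        = 2 * Int.fract (g n) - α := by
    intro n
    induction n with
    | zero =>
      simp only [zero_add, Finset.sum_range_one, hg0]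
      have hfl : ⌊α⌋ = 1 := by
        rw [Int.floor_eq_iff]; push_cast; constructor <;> linarith
      have hfr : Int.fract α = α - 1 := by rw [Int.fract, hfl]; push_cast; ring
      have hodd : Odd (1:ℤ) := odd_one
      rw [hfl, hfr, if_pos hodd]
      ring
    | succ n ih =>
      rw [Finset.sum_range_succ, Finset.sum_range_succ (f := fun m => if Odd ⌊g m⌋ then (1:ℝ) else 0)]
      have hk := fract_two_mul_key (g n)
      rw [← hsucc n] at hk
      rw [hk]
      linarith [ih]
  show |(∑ m ∈ Finset.range (l + 1), Int.fract (g m)) -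
      (((Finset.range (l + 1)).filter (fun d : ℕ => Odd ⌊g d⌋)).card : ℝ)| ≤ 2
  rw [hcard, key]
  have h1 := Int.fract_nonneg (g l)
  have h2 := Int.fract_lt_one (g l)
  rw [abs_le]
  constructor <;> linarith
end

section
/- Let k ≥ 2 and q ≥ 1 be integers, and define b_k(n) = 1 − k if k divides n and b_k(n) = 1 otherwise. Define f(d) = 1 if d = k^{qn} for some integer n ≥ 0 and f(d) = 0 otherwise; define g(d) = b_k(n) if d = n^q for some positive integer n and g(d) = 0 otherwise; and let h(n) = ∑_{d | n} f(d) g(n/d). Then for every real number x ≥ 2, ∑_{n ≤ x} h(n) = (k−1) ∑_{0 ≤ d ≤ (1/q) log_k x} {x^{1/q}/k^d} + O(1), where the implied constant may depend on k and q. -/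
open scoped Classical

/-- `b_k(n) = 1 - k` if `k ∣ n`, else `1`. -/
noncomputable def bAux (k n : ℕ) : ℤ := if k ∣ n then 1 - (k : ℤ) else 1

/-- `f(d) = 1` if `d = k^(q n)` for some `n ≥ 0`, else `0`. -/
noncomputable def fAux (k q d : ℕ) : ℤ := if ∃ n : ℕ, d = k ^ (q * n) then 1 else 0

/-- `g(d) = b_k(n)` if `d = n^q` for a positive integer `n`, else `0`. -/
noncomputable def gAux (k q d : ℕ) : ℤ :=
  if ∃ n : ℕ, 0 < n ∧ d = n ^ q ∧ k ∣ n then 1 - (k : ℤ)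
  else if ∃ n : ℕ, 0 < n ∧ d = n ^ q then 1 else 0

/-- `h(n) = ∑_{d ∣ n} f(d) g(n/d)`. -/
noncomputable def hAux (k q n : ℕ) : ℤ :=
  ∑ d ∈ n.divisors, fAux k q d * gAux k q (n / d)

/-!
Swapping the divisor sum, `∑_{n ≤ x} h(n) = ∑_{k^{qd} ≤ x} ∑_{m ≤ x/k^{qd}} g(m)`. The inner sum runs
over `m = j^q` with `j ≤ M_d := ⌊x^{1/q}/k^d⌋`, and `∑_{j ≤ M} b_k(j) = M - k⌊M/k⌋`, so it equals
`M_d - k M_{d+1}`. With `a_d = {x^{1/q}/k^d}` this is `k a_{d+1} - a_d`, and against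
`(k-1) ∑_{d ≤ D} a_d` the sum telescopes to `k (a_{D+1} - a_0)`, of absolute value at most `k`.
-/

open Finset

theorem sum_Ioc_sum_divisors_mul {R : Type*} [Semiring R] (f g : ℕ → R) (N : ℕ) :
    ∑ n ∈ Ioc 0 N, ∑ d ∈ n.divisors, f d * g (n / d)
      = ∑ a ∈ Ioc 0 N, f a * ∑ b ∈ Ioc 0 (N / a), g b := by
  -- An arithmetic function must vanish at `0`, a value neither side evaluates.
  let F : ArithmeticFunction R := ⟨fun n ↦ if n = 0 then 0 else f n, rfl⟩
  let G : ArithmeticFunction R := ⟨fun n ↦ if n = 0 then 0 else g n, rfl⟩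
  have hF : ∀ n, n ≠ 0 → F n = f n := fun _ hn ↦ if_neg hn
  have hG : ∀ n, n ≠ 0 → G n = g n := fun _ hn ↦ if_neg hn
  calc ∑ n ∈ Ioc 0 N, ∑ d ∈ n.divisors, f d * g (n / d)
      = ∑ n ∈ Ioc 0 N, (F * G) n := by
        refine sum_congr rfl fun n hn ↦ ?_
        rw [ArithmeticFunction.mul_apply, Nat.sum_divisorsAntidiagonal (F · * G ·)]
        refine sum_congr rfl fun d hd ↦ ?_
        obtain ⟨hdn, hn0⟩ := Nat.mem_divisors.1 hd
        rw [hF d (ne_zero_of_dvd_ne_zero hn0 hdn),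
          hG _ (Nat.div_ne_zero_iff_of_dvd hdn |>.2 ⟨hn0, ne_zero_of_dvd_ne_zero hn0 hdn⟩)]
    _ = ∑ n ∈ Ioc 0 N, F n * ∑ m ∈ Ioc 0 (N / n), G m :=
        ArithmeticFunction.sum_Ioc_mul_eq_sum_sum F G N
    _ = ∑ a ∈ Ioc 0 N, f a * ∑ b ∈ Ioc 0 (N / a), g b := by
        refine sum_congr rfl fun a ha ↦ ?_
        rw [hF a (mem_Ioc.1 ha).1.ne']
        exact congrArg _ (sum_congr rfl fun b hb ↦ hG b (mem_Ioc.1 hb).1.ne')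

theorem pow_mul_le_floor_iff {k q : ℕ} (hk : 1 < k) (hq : q ≠ 0) {x : ℝ} (hx : 1 ≤ x) (d : ℕ) :
    k ^ (q * d) ≤ ⌊x⌋₊ ↔ d ≤ ⌊Real.log x / (q * Real.log k)⌋₊ := by
  have hlogk : 0 < Real.log k := Real.log_pos (by exact_mod_cast hk)
  have hqlogk : 0 < (q : ℝ) * Real.log k := by positivity
  rw [Nat.le_floor_iff (by linarith), Nat.le_floor_iff (by have := Real.log_nonneg hx; positivity),
    le_div_iff₀ hqlogk, ← Real.log_le_log_iff (by positivity) (by linarith), Nat.cast_pow,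
    Real.log_pow, Nat.cast_mul]
  constructor <;> intro h <;> linarith

theorem pow_le_floor_div_pow_iff {q m : ℕ} (hq : q ≠ 0) (hm : 0 < m) {x : ℝ} (hx : 0 ≤ x) (j : ℕ) :
    j ^ q ≤ ⌊x⌋₊ / m ^ q ↔ j ≤ ⌊x ^ (1 / (q : ℝ)) / m⌋₊ := by
  rw [Nat.le_div_iff_mul_le (by positivity), ← mul_pow, Nat.le_floor_iff hx,
    Nat.le_floor_iff (by positivity), le_div_iff₀ (by positivity), one_div,
    Real.le_rpow_inv_iff_of_pos (by positivity) hx (by positivity), Real.rpow_natCast]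
  norm_cast

section

variable {k q : ℕ}

theorem gAux_pow (hq : q ≠ 0) {j : ℕ} (hj : 0 < j) : gAux k q (j ^ q) = bAux k j := by
  have hinj : Function.Injective (· ^ q : ℕ → ℕ) := Nat.pow_left_injective hq
  unfold gAux bAux
  by_cases hdvd : k ∣ j
  · rw [if_pos ⟨j, hj, rfl, hdvd⟩, if_pos hdvd]
  · rw [if_neg, if_pos ⟨j, hj, rfl⟩, if_neg hdvd]
    rintro ⟨n, -, hn, hnd⟩
    exact hdvd (hinj hn.symm ▸ hnd)

theorem gAux_eq_zero {d : ℕ} (h : ¬ ∃ n : ℕ, 0 < n ∧ d = n ^ q) : gAux k q d = 0 := by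
  unfold gAux
  rw [if_neg fun ⟨n, hn0, hn, _⟩ ↦ h ⟨n, hn0, hn⟩, if_neg h]

theorem sum_Ioc_gAux (hq : q ≠ 0) {P R : ℕ} (hR : ∀ j : ℕ, 0 < j → (j ^ q ≤ P ↔ j ≤ R)) :
    ∑ b ∈ Ioc 0 P, gAux k q b = ∑ j ∈ Ioc 0 R, bAux k j := by
  rw [← sum_filter_of_ne (p := fun b ↦ ∃ n : ℕ, 0 < n ∧ b = n ^ q)
    fun b _ hb ↦ by_contra fun h ↦ hb (gAux_eq_zero h)]
  have himage : {b ∈ Ioc 0 P | ∃ n : ℕ, 0 < n ∧ b = n ^ q} = (Ioc 0 R).image (· ^ q) := by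
    ext b
    simp only [mem_filter, mem_Ioc, mem_image]
    constructor
    · rintro ⟨⟨-, hbP⟩, j, hj, rfl⟩
      exact ⟨j, ⟨hj, (hR j hj).1 hbP⟩, rfl⟩
    · rintro ⟨j, ⟨hj, hjR⟩, rfl⟩
      exact ⟨⟨by positivity, (hR j hj).2 hjR⟩, j, hj, rfl⟩
  rw [himage, sum_image fun a _ b _ h ↦ Nat.pow_left_injective hq h]
  exact sum_congr rfl fun j hj ↦ gAux_pow hq (mem_Ioc.1 hj).1

theorem sum_Ioc_bAux (P : ℕ) : ∑ j ∈ Ioc 0 P, bAux k j = (P : ℤ) - k * (P / k : ℕ) := by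
  have hb : ∀ j, bAux k j = 1 - if k ∣ j then (k : ℤ) else 0 := fun j ↦ by
    unfold bAux; split_ifs <;> ring
  simp only [hb, sum_sub_distrib, sum_ite, sum_const, Nat.card_Ioc,
    Nat.Ioc_filter_dvd_card_eq_div, nsmul_eq_mul, mul_one, Nat.sub_zero]
  ring

theorem sum_Ioc_fAux_mul (hk : 1 < k) (hq : q ≠ 0) {N D : ℕ}
    (hD : ∀ d : ℕ, k ^ (q * d) ≤ N ↔ d ≤ D) (T : ℕ → ℤ) :
    ∑ a ∈ Ioc 0 N, fAux k q a * T a = ∑ d ∈ range (D + 1), T (k ^ (q * d)) := by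
  have hinj : Function.Injective (fun d : ℕ ↦ k ^ (q * d)) := by
    simp only [pow_mul]
    exact Nat.pow_right_injective (hk.trans_le (Nat.le_self_pow hq k))
  have hf : ∀ a, fAux k q a * T a = if ∃ n : ℕ, a = k ^ (q * n) then T a else 0 := fun a ↦ by
    unfold fAux; split_ifs <;> simp
  have himage : {a ∈ Ioc 0 N | ∃ n : ℕ, a = k ^ (q * n)}
      = (range (D + 1)).image fun d ↦ k ^ (q * d) := by
    ext a
    simp only [mem_filter, mem_Ioc, mem_image, mem_range, Nat.lt_succ_iff]
    constructor
    · rintro ⟨⟨-, haN⟩, d, rfl⟩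
      exact ⟨d, (hD d).1 haN, rfl⟩
    · rintro ⟨d, hd, rfl⟩
      exact ⟨⟨by positivity, (hD d).2 hd⟩, d, rfl⟩
  simp only [hf]
  rw [← sum_filter, himage, sum_image fun a _ b _ h ↦ hinj h]

theorem sum_Ioc_hAux (hk : 1 < k) (hq : q ≠ 0) {x : ℝ} (hx : 1 ≤ x) :
    ∑ n ∈ Ioc 0 ⌊x⌋₊, hAux k q n
      = ∑ d ∈ range (⌊Real.log x / (q * Real.log k)⌋₊ + 1),
          ((⌊x ^ (1 / (q : ℝ)) / (k : ℝ) ^ d⌋₊ : ℤ) - k * ⌊x ^ (1 / (q : ℝ)) / (k : ℝ) ^ (d + 1)⌋₊) := by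
  unfold hAux
  rw [sum_Ioc_sum_divisors_mul, sum_Ioc_fAux_mul hk hq (pow_mul_le_floor_iff hk hq hx)]
  refine sum_congr rfl fun d _ ↦ ?_
  rw [pow_mul', sum_Ioc_gAux hq fun j _ ↦ by
      exact_mod_cast pow_le_floor_div_pow_iff hq (by positivity) (by linarith) j,
    sum_Ioc_bAux, ← Nat.floor_div_natCast, pow_succ, div_div, Nat.cast_pow]

end

theorem natFloor_div_pow_sub_mul_natFloor {y c : ℝ} (hy : 0 ≤ y) (hc : 0 < c) (d : ℕ) :
    (⌊y / c ^ d⌋₊ : ℝ) - c * ⌊y / c ^ (d + 1)⌋₊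
      = c * Int.fract (y / c ^ (d + 1)) - Int.fract (y / c ^ d) := by
  have hfloor : ∀ z : ℝ, 0 ≤ z → (⌊z⌋₊ : ℝ) = z - Int.fract z := fun z hz ↦ by
    rw [Int.self_sub_fract, ← Int.natCast_floor_eq_floor hz, Int.cast_natCast]
  rw [hfloor _ (by positivity), hfloor _ (by positivity), pow_succ]
  field_simp
  ring

theorem sum_range_mul_succ_sub_sub_mul_sum (c : ℝ) (a : ℕ → ℝ) (n : ℕ) :
    ∑ d ∈ range n, (c * a (d + 1) - a d) - (c - 1) * ∑ d ∈ range n, a d = c * (a n - a 0) := by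
  rw [mul_sum, ← sum_sub_distrib, mul_sub, ← sum_range_sub (c * a ·)]
  exact sum_congr rfl fun d _ ↦ by ring

/-- `∑_{n ≤ x} h(n) = (k-1) ∑_{0 ≤ d ≤ (1/q) log_k x} {x^{1/q}/k^d} + O_{k,q}(1)`. -/
theorem stmt_2 (k q : ℕ) (hk : 2 ≤ k) (hq : 1 ≤ q) :
    ∃ C : ℝ, ∀ x : ℝ, 2 ≤ x →
      |(∑ n ∈ Finset.Icc 1 ⌊x⌋₊, (hAux k q n : ℝ)) -
          ((k : ℝ) - 1) *
            ∑ d ∈ Finset.range (⌊Real.log x / ((q : ℝ) * Real.log k)⌋₊ + 1),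
              Int.fract (x ^ (1 / (q : ℝ)) / (k : ℝ) ^ d)| ≤ C := by
  refine ⟨k, fun x hx ↦ ?_⟩
  set y := x ^ (1 / (q : ℝ))
  set D := ⌊Real.log x / (q * Real.log k)⌋₊
  have hk0 : (0 : ℝ) < k := by positivity
  have hsum : ∑ n ∈ Icc 1 ⌊x⌋₊, (hAux k q n : ℝ)
      = ∑ d ∈ range (D + 1),
          ((k : ℝ) * Int.fract (y / (k : ℝ) ^ (d + 1)) - Int.fract (y / (k : ℝ) ^ d)) := by
    rw [show Icc 1 ⌊x⌋₊ = Ioc 0 ⌊x⌋₊ from Icc_add_one_left_eq_Ioc 0 _, ← Int.cast_sum,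
      sum_Ioc_hAux hk (by omega) (by linarith)]
    push_cast
    exact sum_congr rfl fun d _ ↦ natFloor_div_pow_sub_mul_natFloor (by positivity) hk0 d
  rw [hsum, sum_range_mul_succ_sub_sub_mul_sum (k : ℝ) (fun d ↦ Int.fract (y / (k : ℝ) ^ d)),
    abs_mul, abs_of_pos hk0]
  refine mul_le_of_le_one_right hk0.le (abs_le.2 ⟨?_, ?_⟩) <;>
    linarith [Int.fract_nonneg (y / (k : ℝ) ^ 0), Int.fract_lt_one (y / (k : ℝ) ^ 0),
      Int.fract_nonneg (y / (k : ℝ) ^ (D + 1)), Int.fract_lt_one (y / (k : ℝ) ^ (D + 1))]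
end

section
/- Let k ≥ 2 and q ≥ 1 be integers, and let h(n) = ∑_{d | n} f(d)g(n/d) where f(d) = 1 if d is of the form k^{qn} (n ≥ 0) and 0 otherwise, and g(d) = b_k(m) if d = m^q for a positive integer m and 0 otherwise, with b_k(m) = 1−k if k | m and 1 otherwise. Then for every n ∈ ℕ, |h(n)| ≤ (k−1)((1/q) log_k n + 1). -/
open scoped Classical

/-!
Only the divisors `d = k^(q m)` contribute to `h(n)`, each by a term `g(n/d)` of absolute value
at most `k - 1`. Such a divisor satisfies `q m ≤ ⌊log_k n⌋`, so there are at most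
`⌊log_k n⌋ / q + 1 ≤ (1/q) log_k n + 1` of them.
-/

open Finset

noncomputable def powDivisors (k q n : ℕ) : Finset ℕ :=
  n.divisors.filter fun d => ∃ m : ℕ, d = k ^ (q * m)

lemma abs_gAux_le {k : ℕ} (hk : 2 ≤ k) (q d : ℕ) : |gAux k q d| ≤ (k : ℤ) - 1 := by
  have hk' : (2 : ℤ) ≤ k := by exact_mod_cast hk
  unfold gAux
  split_ifs
  · rw [abs_sub_comm, abs_of_nonneg (by omega)]
  · rw [abs_one]; omega
  · rw [abs_zero]; omega

lemma hAux_eq_sum_powDivisors (k q n : ℕ) :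
    hAux k q n = ∑ d ∈ powDivisors k q n, gAux k q (n / d) := by
  simp only [hAux, fAux, powDivisors, sum_filter, ite_mul, one_mul, zero_mul]

lemma abs_hAux_le {k : ℕ} (hk : 2 ≤ k) (q n : ℕ) :
    |hAux k q n| ≤ #(powDivisors k q n) * ((k : ℤ) - 1) := by
  rw [hAux_eq_sum_powDivisors, ← nsmul_eq_mul]
  exact (abs_sum_le_sum_abs _ _).trans
    (sum_le_card_nsmul _ _ _ fun d _ => abs_gAux_le hk q (n / d))

lemma card_powDivisors_le {k : ℕ} (hk : 1 < k) (q n : ℕ) :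
    #(powDivisors k q n) ≤ Nat.log k n / q + 1 := by
  have hsub : powDivisors k q n ⊆ (range (Nat.log k n / q + 1)).image fun m => k ^ (q * m) := by
    intro d hd
    obtain ⟨hdn, m, rfl⟩ := mem_filter.mp hd
    have hqm : q * m ≤ Nat.log k n := Nat.le_log_of_pow_le hk (Nat.divisor_le hdn)
    refine mem_image.mpr ⟨min m (Nat.log k n / q), by simp, ?_⟩
    -- `min m (log / q)` is `m` unless `q = 0`, when every exponent `q * m` vanishes
    rcases Nat.eq_zero_or_pos q with rfl | hq
    · simp
    · rw [min_eq_left ((Nat.le_div_iff_mul_le hq).mpr (by linarith))]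
  calc #(powDivisors k q n) ≤ #((range (Nat.log k n / q + 1)).image fun m => k ^ (q * m)) :=
        card_le_card hsub
    _ ≤ Nat.log k n / q + 1 := card_image_le.trans (card_range _).le

lemma natLog_div_le_div_logb (k q n : ℕ) :
    ((Nat.log k n / q : ℕ) : ℝ) ≤ (1 / (q : ℝ)) * (Real.log n / Real.log k) := by
  calc ((Nat.log k n / q : ℕ) : ℝ) ≤ (Nat.log k n : ℝ) / q := Nat.cast_div_le
    _ ≤ Real.logb k n / q := by gcongr; exact Real.natLog_le_logb n k
    _ = (1 / (q : ℝ)) * (Real.log n / Real.log k) := by rw [Real.logb]; ring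

theorem stmt_4_general (k q : ℕ) (hk : 2 ≤ k) :
    ∀ n : ℕ, 1 ≤ n →
      |(hAux k q n : ℝ)| ≤
        ((k : ℝ) - 1) * ((1 / (q : ℝ)) * (Real.log n / Real.log k) + 1) := by
  intro n _
  have hcard : (#(powDivisors k q n) : ℝ) ≤ (Nat.log k n / q : ℕ) + 1 := by
    exact_mod_cast card_powDivisors_le hk q n
  have hk1 : (0 : ℝ) ≤ (k : ℝ) - 1 := by
    rw [sub_nonneg]; exact_mod_cast (by omega : 1 ≤ k)
  calc |(hAux k q n : ℝ)| ≤ #(powDivisors k q n) * ((k : ℝ) - 1) := by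
        exact_mod_cast abs_hAux_le hk q n
    _ ≤ ((k : ℝ) - 1) * ((1 / (q : ℝ)) * (Real.log n / Real.log k) + 1) := by
        rw [mul_comm]
        gcongr
        linarith [natLog_div_le_div_logb k q n]

/-- `|h(n)| ≤ (k-1)((1/q) log_k n + 1)`. -/
theorem stmt_4 (k q : ℕ) (hk : 2 ≤ k) (hq : 1 ≤ q) :
    ∀ n : ℕ, 1 ≤ n →
      |(hAux k q n : ℝ)| ≤
        ((k : ℝ) - 1) * ((1 / (q : ℝ)) * (Real.log n / Real.log k) + 1) :=
  stmt_4_general k q hk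
end

section
/- Let k ≥ 2 and q ≥ 1 be integers, and define η_k(s) = (1 − k^{1−s})ζ(s) and φ(k, s) = ∑_{n=0}^∞ k^{−ns} = (1 − k^{−s})^{−1}. Then for every complex s with Re(s) > 1/q, the Dirichlet series ∑_{n=1}^∞ h(n) n^{−s} converges absolutely and equals φ(k, qs) η_k(qs), where h(n) = ∑_{d|n} f(d)g(n/d) as above. -/
open scoped Classical

open scoped LSeries.notation

/-- The `F` series is a geometric series. -/
lemma hasSum_fAux (k q : ℕ) (hk : 2 ≤ k) (hq : 1 ≤ q) {s : ℂ}
    (ht : 0 < ((q : ℂ) * s).re) :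
    HasSum (LSeries.term (fun n => ((fAux k q n : ℤ) : ℂ)) s)
      (1 - (k : ℂ) ^ (-((q : ℂ) * s)))⁻¹ := by
  set t := (q : ℂ) * s with htdef
  have hk0 : 0 < k := by omega
  have hkR : (1 : ℝ) < k := by exact_mod_cast (by omega : 1 < k)
  have hc : ‖(k : ℂ) ^ (-t)‖ < 1 := by
    rw [Complex.norm_natCast_cpow_of_pos hk0]
    exact Real.rpow_lt_one_of_one_lt_of_neg hkR (by simpa using ht)
  have hgeo := hasSum_geometric_of_norm_lt_one hc
  have hinj : Function.Injective (fun m : ℕ => k ^ (q * m)) := by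
    intro a b hab
    have := Nat.pow_right_injective hk hab
    exact Nat.eq_of_mul_eq_mul_left (by omega) this
  refine (hinj.hasSum_iff ?_).mp (hgeo.congr_fun ?_)
  · intro n hn
    rcases eq_or_ne n 0 with rfl | h0
    · simp
    rw [LSeries.term_of_ne_zero h0]
    have hf0 : fAux k q n = 0 := by
      rw [fAux, if_neg]
      rintro ⟨m, rfl⟩
      exact hn ⟨m, rfl⟩
    simp [hf0]
  · intro m
    have hne : k ^ (q * m) ≠ 0 := pow_ne_zero _ (by omega)
    have hF : fAux k q (k ^ (q * m)) = 1 := if_pos ⟨m, rfl⟩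
    simp only [Function.comp_apply]
    rw [LSeries.term_of_ne_zero hne, hF]
    have e1 : ((k ^ (q * m) : ℕ) : ℂ) ^ s = ((k : ℂ) ^ t) ^ m := by
      rw [Nat.cast_pow, ← Complex.natCast_cpow_natCast_mul,
        show ((q * m : ℕ) : ℂ) * s = (m : ℕ) * t by push_cast [htdef]; ring,
        Complex.cpow_nat_mul]
    rw [e1, Complex.cpow_neg, inv_pow]
    push_cast
    rw [one_div]

/-- The series of the indicator of multiples of `k`. -/
lemma hasSum_indicator (k : ℕ) (hk : 2 ≤ k) {t : ℂ} (ht : 1 < t.re) :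
    HasSum (LSeries.term (fun m => if k ∣ m then (1 : ℂ) else 0) t)
      ((k : ℂ) ^ (-t) * riemannZeta t) := by
  have hz : HasSum (LSeries.term 1 t) (riemannZeta t) := LSeriesHasSum_one ht
  have hmul := hz.mul_left ((k : ℂ) ^ (-t))
  have hinj : Function.Injective (fun j : ℕ => k * j) := fun a b hab =>
    Nat.eq_of_mul_eq_mul_left (by omega) hab
  refine (hinj.hasSum_iff ?_).mp (hmul.congr_fun ?_)
  · intro n hn
    rcases eq_or_ne n 0 with rfl | h0
    · simp
    rw [LSeries.term_of_ne_zero h0, if_neg, zero_div]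
    rintro ⟨j, rfl⟩
    exact hn ⟨j, rfl⟩
  · intro j
    rcases eq_or_ne j 0 with rfl | hj
    · simp
    have hkj : k * j ≠ 0 := Nat.mul_ne_zero (by omega) hj
    simp only [Function.comp_apply]
    rw [LSeries.term_of_ne_zero hkj, LSeries.term_of_ne_zero hj, if_pos ⟨j, rfl⟩,
      Pi.one_apply, Nat.cast_mul, Complex.natCast_mul_natCast_cpow,
      Complex.cpow_neg, one_div, one_div, mul_inv]

/-- The series of `bAux` equals `(1 - k^{1-t}) ζ(t)`. -/
lemma hasSum_bAux (k : ℕ) (hk : 2 ≤ k) {t : ℂ} (ht : 1 < t.re) :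
    HasSum (LSeries.term (fun m => ((bAux k m : ℤ) : ℂ)) t)
      ((1 - (k : ℂ) ^ (1 - t)) * riemannZeta t) := by
  have hz : HasSum (LSeries.term 1 t) (riemannZeta t) := LSeriesHasSum_one ht
  have hD := hasSum_indicator k hk ht
  have h := hz.sub (hD.mul_left (k : ℂ))
  have hk0 : (k : ℂ) ≠ 0 := Nat.cast_ne_zero.mpr (by omega)
  have hval : riemannZeta t - (k : ℂ) * ((k : ℂ) ^ (-t) * riemannZeta t) =
      (1 - (k : ℂ) ^ (1 - t)) * riemannZeta t := by
    have e : (k : ℂ) ^ (1 - t) = (k : ℂ) * (k : ℂ) ^ (-t) := by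
      rw [sub_eq_add_neg, Complex.cpow_add _ _ hk0, Complex.cpow_one]
    rw [e]; ring
  rw [hval] at h
  refine h.congr_fun fun m => ?_
  rcases eq_or_ne m 0 with rfl | hm
  · simp
  rw [LSeries.term_of_ne_zero hm, LSeries.term_of_ne_zero hm, LSeries.term_of_ne_zero hm,
    Pi.one_apply]
  by_cases hdm : k ∣ m
  · simp only [bAux, if_pos hdm]
    push_cast
    ring
  · simp only [bAux, if_neg hdm]
    push_cast
    ring

/-- The series of `gAux` equals `(1 - k^{1-qs}) ζ(qs)`. -/
lemma hasSum_gAux (k q : ℕ) (hk : 2 ≤ k) (hq : 1 ≤ q) {s : ℂ}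
    (ht : 1 < ((q : ℂ) * s).re) :
    HasSum (LSeries.term (fun n => ((gAux k q n : ℤ) : ℂ)) s)
      ((1 - (k : ℂ) ^ (1 - (q : ℂ) * s)) * riemannZeta ((q : ℂ) * s)) := by
  have hB := hasSum_bAux k hk ht
  have hinj : Function.Injective (fun m : ℕ => m ^ q) :=
    Nat.pow_left_injective (by omega : q ≠ 0)
  refine (hinj.hasSum_iff ?_).mp (hB.congr_fun ?_)
  · intro n hn
    rcases eq_or_ne n 0 with rfl | h0
    · simp
    rw [LSeries.term_of_ne_zero h0]
    have hg0 : gAux k q n = 0 := by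
      rw [gAux, if_neg, if_neg]
      · rintro ⟨m, hm, rfl⟩
        exact hn ⟨m, rfl⟩
      · rintro ⟨m, hm, rfl, -⟩
        exact hn ⟨m, rfl⟩
    simp [hg0]
  · intro m
    rcases eq_or_ne m 0 with rfl | hm
    · have hz : (0 : ℕ) ^ q = 0 := Nat.zero_pow (by omega)
      simp [Function.comp_apply, hz]
    · have hmq : m ^ q ≠ 0 := pow_ne_zero _ hm
      simp only [Function.comp_apply]
      rw [LSeries.term_of_ne_zero hmq, LSeries.term_of_ne_zero hm]
      have hden : ((m ^ q : ℕ) : ℂ) ^ s = (m : ℂ) ^ ((q : ℂ) * s) := by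
        rw [Nat.cast_pow]
        exact (Complex.natCast_cpow_natCast_mul m q s).symm
      rw [hden]
      congr 1
      have hg : gAux k q (m ^ q) = bAux k m := by
        rw [gAux, bAux]
        by_cases hdm : k ∣ m
        · rw [if_pos ⟨m, Nat.pos_of_ne_zero hm, rfl, hdm⟩, if_pos hdm]
        · rw [if_neg, if_pos ⟨m, Nat.pos_of_ne_zero hm, rfl⟩, if_neg hdm]
          rintro ⟨n, hn0, hnq, hkn⟩
          have : m = n := hinj hnq
          exact hdm (this ▸ hkn)
      rw [hg]

/-- for `Re(s) > 1/q`, the Dirichlet series of `h` converges absolutely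
and equals `φ(k,qs) η_k(qs) = (1 - k^{-qs})⁻¹ (1 - k^{1-qs}) ζ(qs)`. -/
theorem stmt_6 (k q : ℕ) (hk : 2 ≤ k) (hq : 1 ≤ q) :
    ∀ s : ℂ, 1 / (q : ℝ) < s.re →
      Summable (fun n : ℕ => ‖(hAux k q (n + 1) : ℂ) / ((n + 1 : ℕ) : ℂ) ^ s‖) ∧
      ∑' n : ℕ, (hAux k q (n + 1) : ℂ) / ((n + 1 : ℕ) : ℂ) ^ s =
        (1 - (k : ℂ) ^ (-((q : ℂ) * s)))⁻¹ * ((1 - (k : ℂ) ^ (1 - (q : ℂ) * s)) *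
          riemannZeta ((q : ℂ) * s)) := by
  intro s hs
  have hqR : (0 : ℝ) < q := by exact_mod_cast (by omega : 0 < q)
  have htre : 1 < ((q : ℂ) * s).re := by
    have hre : ((q : ℂ) * s).re = q * s.re := by simp [Complex.mul_re]
    rw [hre]
    calc (1 : ℝ) = q * (1 / q) := by field_simp
    _ < q * s.re := by exact mul_lt_mul_of_pos_left hs hqR
  have ht0 : 0 < ((q : ℂ) * s).re := by linarith
  have hF := hasSum_fAux k q hk hq ht0
  have hG := hasSum_gAux k q hk hq htre
  have hFG : LSeriesHasSum
      ((fun n => ((fAux k q n : ℤ) : ℂ)) ⍟ (fun n => ((gAux k q n : ℤ) : ℂ))) s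
      ((1 - (k : ℂ) ^ (-((q : ℂ) * s)))⁻¹ * ((1 - (k : ℂ) ^ (1 - (q : ℂ) * s)) *
        riemannZeta ((q : ℂ) * s))) := LSeriesHasSum.convolution hF hG
  have hcoef : ∀ n, ((fun n => ((fAux k q n : ℤ) : ℂ)) ⍟ (fun n => ((gAux k q n : ℤ) : ℂ))) n
      = ((hAux k q n : ℤ) : ℂ) := by
    intro n
    simp only [LSeries.convolution_def, hAux]
    push_cast
    rw [← Nat.sum_divisorsAntidiagonal fun x y => ((fAux k q x : ℤ) : ℂ) * ((gAux k q y : ℤ) : ℂ)]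
  have hH : HasSum (LSeries.term (fun n => ((hAux k q n : ℤ) : ℂ)) s)
      ((1 - (k : ℂ) ^ (-((q : ℂ) * s)))⁻¹ * ((1 - (k : ℂ) ^ (1 - (q : ℂ) * s)) *
        riemannZeta ((q : ℂ) * s))) := by
    refine hFG.congr_fun fun n => ?_
    exact LSeries.term_congr (fun {n} _ => (hcoef n).symm) s n
  constructor
  · have h1 : Summable (LSeries.term (fun n => ((hAux k q n : ℤ) : ℂ)) s) := hH.summable
    have h2 : Summable (fun n => ‖LSeries.term (fun n => ((hAux k q n : ℤ) : ℂ)) s n‖) :=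
      summable_norm_iff.mpr h1
    have h3 := h2.comp_injective Nat.succ_injective
    refine h3.congr fun n => ?_
    simp only [Function.comp_apply]
    rw [LSeries.term_of_ne_zero (Nat.succ_ne_zero n)]
  · have h4 : ∑' n : ℕ, LSeries.term (fun n => ((hAux k q n : ℤ) : ℂ)) s (n + 1) =
        ∑' n : ℕ, LSeries.term (fun n => ((hAux k q n : ℤ) : ℂ)) s n := by
      refine Function.Injective.tsum_eq Nat.succ_injective ?_
      intro n hn
      rcases eq_or_ne n 0 with rfl | h0
      · simp at hn
      · exact ⟨n - 1, by omega⟩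
    calc ∑' n : ℕ, (hAux k q (n + 1) : ℂ) / ((n + 1 : ℕ) : ℂ) ^ s
        = ∑' n : ℕ, LSeries.term (fun n => ((hAux k q n : ℤ) : ℂ)) s (n + 1) := by
          refine tsum_congr fun n => ?_
          rw [LSeries.term_of_ne_zero (Nat.succ_ne_zero n)]
    _ = _ := by rw [h4, hH.tsum_eq]
end

section
/- Let k ≥ 2, q ≥ 1 be integers, x > 1 a real number, and Φ(s) = φ(k, qs) η_k(qs) x^s / s with φ(k, w) = (1 − k^{−w})^{−1} and η_k(w) = (1 − k^{1−w})ζ(w). Then Φ has a double pole at s = 0 and its residue there equals (k−1) · (log x)/(2q log k) + C(k, q) for some constant C(k, q) independent of x. In particular, the residue equals (k−1) log x/(2q log k) + O_{k,q}(1). -/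
/-!
Since `1 - k^(-qs)` has a simple zero at `s = 0` with derivative `q log k`, the function
`B(s) = s φ(k, qs) η_k(qs)` (`regularPart k q`) is analytic at `0`, and `Φ(s) = B(s) x^s / s²`.
The residue is therefore `(B x^s)'(0) = B'(0) + B(0) log x`, where
`B(0) = η_k(0) / (q log k) = (k - 1) / (2 q log k)`. The constant `C = B'(0)` is real because `B`
is real on the real axis (`ζ(conj s) = conj ζ(s)`).
-/

open Complex Filter Topology ComplexConjugate

section Dslope

variable {𝕜 : Type*} [NontriviallyNormedField 𝕜]

theorem AnalyticAt.dslope {E : Type*} [NormedAddCommGroup E] [NormedSpace 𝕜 E] {f : 𝕜 → E}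
    {z₀ : 𝕜} (hf : AnalyticAt 𝕜 f z₀) : AnalyticAt 𝕜 (dslope f z₀) z₀ :=
  let ⟨p, hp⟩ := hf
  ⟨p.fslope, hp.has_fpower_series_dslope_fslope⟩

theorem div_sub_sq_eq_add_dslope_dslope (F : 𝕜 → 𝕜) {z₀ s : 𝕜} (hs : s ≠ z₀) :
    F s / (s - z₀) ^ 2 =
      F z₀ / (s - z₀) ^ 2 + deriv F z₀ / (s - z₀) + dslope (dslope F z₀) z₀ s := by
  have : s - z₀ ≠ 0 := sub_ne_zero.2 hs
  rw [dslope_of_ne _ hs, slope_def_field, dslope_of_ne _ hs, slope_def_field, dslope_same]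
  field_simp
  ring

end Dslope

theorem HasDerivAt.im_eq_zero_of_eventually_im_eq_zero {e : ℂ → ℂ} {e' : ℂ} {x : ℝ}
    (he : HasDerivAt e e' x) (hreal : ∀ᶠ t : ℝ in 𝓝 x, (e t).im = 0) : e'.im = 0 := by
  have him : HasDerivAt (fun t : ℝ => (e t).im) e'.im x := by
    simpa [Function.comp_def] using imCLM.hasFDerivAt.comp_hasDerivAt x he.comp_ofReal
  exact him.unique ((hasDerivAt_const x 0).congr_of_eventuallyEq hreal)

theorem analyticAt_riemannZeta {s : ℂ} (hs : s ≠ 1) : AnalyticAt ℂ riemannZeta s :=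
  DifferentiableOn.analyticAt (fun _ ht => (differentiableAt_riemannZeta ht).differentiableWithinAt)
    (isOpen_compl_singleton.mem_nhds hs)

theorem conj_natCast_cpow (k : ℕ) (w : ℂ) : conj ((k : ℂ) ^ w) = (k : ℂ) ^ conj w := by
  simpa using (conj_cpow (k : ℂ) (conj w) (by simp [Real.pi_ne_zero.symm])).symm

noncomputable section

/-- `invPhiK k w = φ(k, w)⁻¹`. -/
def invPhiK (k : ℕ) (w : ℂ) : ℂ := 1 - (k : ℂ) ^ (-w)

def etaK (k : ℕ) (w : ℂ) : ℂ := (1 - (k : ℂ) ^ (1 - w)) * riemannZeta w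

/-- `s φ(k, qs) η_k(qs)`, with its removable singularity at `s = 0` filled in. -/
def regularPart (k q : ℕ) (s : ℂ) : ℂ :=
  etaK k (q * s) / dslope (fun s => invPhiK k (q * s)) 0 s

section

variable {k : ℕ} (q : ℕ)

theorem invPhiK_zero : invPhiK k 0 = 0 := by
  simp [invPhiK]

theorem conj_invPhiK (w : ℂ) : conj (invPhiK k w) = invPhiK k (conj w) := by
  simp [invPhiK, conj_natCast_cpow]

theorem conj_etaK (w : ℂ) : conj (etaK k w) = etaK k (conj w) := by
  simp [etaK, conj_natCast_cpow]

theorem etaK_zero : etaK k 0 = ((k : ℂ) - 1) / 2 := by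
  simp only [etaK, sub_zero, cpow_one, riemannZeta_zero]
  ring

theorem analyticAt_invPhiK_comp_mul (hk : k ≠ 0) (z : ℂ) :
    AnalyticAt ℂ (fun s => invPhiK k (q * s)) z :=
  analyticAt_const.sub <| analyticAt_const.cpow (analyticAt_const.mul analyticAt_id).neg
    (natCast_mem_slitPlane.2 hk)

theorem hasDerivAt_invPhiK_comp_mul_zero (hk : k ≠ 0) :
    HasDerivAt (fun s => invPhiK k (q * s)) (q * Real.log k) 0 := by
  have hlin : HasDerivAt (fun s : ℂ => -(q * s)) (-q) 0 := by
    simpa [neg_mul] using (hasDerivAt_id' (0 : ℂ)).const_mul (-(q : ℂ))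
  have hpow := hlin.const_cpow (c := (k : ℂ)) (Or.inl (Nat.cast_ne_zero.2 hk))
  refine (hpow.const_sub 1).congr_deriv ?_
  simp [natCast_log, mul_comm]

theorem analyticAt_etaK_comp_mul (hk : k ≠ 0) : AnalyticAt ℂ (fun s => etaK k (q * s)) 0 := by
  refine (analyticAt_const.sub <| analyticAt_const.cpow
    (analyticAt_const.sub (analyticAt_const.mul analyticAt_id)) (natCast_mem_slitPlane.2 hk)).mul ?_
  exact (analyticAt_riemannZeta zero_ne_one).comp_of_eq (analyticAt_const.mul analyticAt_id)
    (mul_zero _)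

theorem dslope_invPhiK_comp_mul_zero (hk : k ≠ 0) :
    dslope (fun s => invPhiK k (q * s)) 0 0 = q * Real.log k := by
  rw [dslope_same]
  exact (hasDerivAt_invPhiK_comp_mul_zero q hk).deriv

theorem analyticAt_regularPart (hk : 2 ≤ k) (hq : q ≠ 0) :
    AnalyticAt ℂ (regularPart k q) 0 := by
  have hk0 : k ≠ 0 := by omega
  refine (analyticAt_etaK_comp_mul q hk0).div (analyticAt_invPhiK_comp_mul q hk0 0).dslope ?_
  rw [dslope_invPhiK_comp_mul_zero q hk0]
  have : (1 : ℝ) < k := by exact_mod_cast hk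
  exact mul_ne_zero (by exact_mod_cast hq) (ofReal_ne_zero.2 (Real.log_pos this).ne')

theorem regularPart_zero (hk : k ≠ 0) :
    regularPart k q 0 = (((k : ℝ) - 1) / (2 * q * Real.log k) : ℝ) := by
  rw [regularPart, mul_zero, etaK_zero, dslope_invPhiK_comp_mul_zero q hk]
  push_cast
  ring

theorem regularPart_ofReal_im (hk : k ≠ 0) (t : ℝ) : (regularPart k q t).im = 0 := by
  rcases eq_or_ne t 0 with rfl | ht
  · rw [ofReal_zero, regularPart_zero q hk, ofReal_im]
  · rw [← conj_eq_iff_im, regularPart, dslope_of_ne _ (ofReal_ne_zero.2 ht), slope_def_field]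
    simp [map_div₀, conj_etaK, conj_invPhiK]

theorem regularPart_zero_ne_zero (hk : 2 ≤ k) (hq : q ≠ 0) : regularPart k q 0 ≠ 0 := by
  have hk1 : (1 : ℝ) < k := by exact_mod_cast hk
  have hlog := Real.log_pos hk1
  have hq0 : (0 : ℝ) < q := by exact_mod_cast Nat.pos_of_ne_zero hq
  rw [regularPart_zero q (by omega), ofReal_ne_zero]
  exact (div_pos (sub_pos.2 hk1) (by positivity)).ne'

theorem deriv_regularPart_zero_im (hk : 2 ≤ k) (hq : q ≠ 0) :
    (deriv (regularPart k q) 0).im = 0 := by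
  have hd : HasDerivAt (regularPart k q) (deriv (regularPart k q) 0) ((0 : ℝ) : ℂ) := by
    rw [ofReal_zero]
    exact (analyticAt_regularPart q hk hq).differentiableAt.hasDerivAt
  exact hd.im_eq_zero_of_eventually_im_eq_zero (.of_forall (regularPart_ofReal_im q (by omega)))

theorem inv_invPhiK_mul_etaK_eq_regularPart_div {s : ℂ} (hs : s ≠ 0) :
    (invPhiK k (q * s))⁻¹ * etaK k (q * s) = regularPart k q s / s := by
  rw [regularPart, dslope_of_ne _ hs, slope_def_field, mul_zero, invPhiK_zero, sub_zero, sub_zero,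
    div_div_eq_mul_div, div_right_comm, mul_div_cancel_right₀ _ hs, div_eq_inv_mul]

end

end

/-- `Φ(s) = φ(k,qs) η_k(qs) x^s / s` has a double pole at `s = 0` whose
residue (the coefficient of `1/s` in the Laurent expansion) equals
`(k-1) log x/(2q log k) + C(k,q)` for a constant `C(k,q)` independent of `x`. -/
theorem stmt_9 (k q : ℕ) (hk : 2 ≤ k) (hq : 1 ≤ q) :
    ∃ C : ℝ, ∀ x : ℝ, 1 < x →
      ∃ (c₂ : ℂ) (G : ℂ → ℂ), AnalyticAt ℂ G 0 ∧ c₂ ≠ 0 ∧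
        ∀ᶠ s in nhdsWithin (0 : ℂ) {(0 : ℂ)}ᶜ,
          (1 - (k : ℂ) ^ (-((q : ℂ) * s)))⁻¹ * ((1 - (k : ℂ) ^ (1 - (q : ℂ) * s)) *
              riemannZeta ((q : ℂ) * s)) * (x : ℂ) ^ s / s =
            c₂ / s ^ 2 +
              ((((k : ℝ) - 1) * Real.log x / (2 * (q : ℝ) * Real.log k) + C : ℝ) : ℂ) / s +
              G s := by
  have hk0 : k ≠ 0 := by omega
  have hq0 : q ≠ 0 := by omega
  have hB := analyticAt_regularPart q hk hq0
  have hC : ((deriv (regularPart k q) 0).re : ℂ) = deriv (regularPart k q) 0 :=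
    ext rfl (by simp [deriv_regularPart_zero_im q hk hq0])
  refine ⟨(deriv (regularPart k q) 0).re, fun x hx => ?_⟩
  set F : ℂ → ℂ := fun s => regularPart k q s * (x : ℂ) ^ s
  have hxC : (x : ℂ) ≠ 0 := ofReal_ne_zero.2 (by linarith)
  have hF : AnalyticAt ℂ F 0 :=
    hB.mul (analyticAt_const.cpow analyticAt_id (ofReal_mem_slitPlane.2 (by linarith)))
  have hF' : deriv F 0 = deriv (regularPart k q) 0 + regularPart k q 0 * Real.log x := by
    refine (hB.differentiableAt.hasDerivAt.mul
      ((hasDerivAt_id (0 : ℂ)).const_cpow (Or.inl hxC))).deriv.trans ?_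
    simp [ofReal_log (by linarith : (0 : ℝ) ≤ x)]
  have hF0 : F 0 ≠ 0 := by simpa [F] using regularPart_zero_ne_zero q hk hq0
  refine ⟨F 0, dslope (dslope F 0) 0, hF.dslope.dslope, hF0, ?_⟩
  filter_upwards [self_mem_nhdsWithin] with s (hs : s ≠ 0)
  have hlaurent := div_sub_sq_eq_add_dslope_dslope F hs
  rw [sub_zero] at hlaurent
  calc _ = F s / s ^ 2 := by
        change (invPhiK k (q * s))⁻¹ * etaK k (q * s) * (x : ℂ) ^ s / s = _
        rw [inv_invPhiK_mul_etaK_eq_regularPart_div q hs, div_mul_eq_mul_div, div_div, ← sq]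
    _ = _ := by
        rw [hlaurent, hF', regularPart_zero q hk0, ← hC, ofReal_re]
        push_cast
        ring
end

section
/- Let ψ(y) = {y} − 1/2 if y ∉ ℤ and ψ(y) = 0 if y ∈ ℤ. Then for every positive integer K and every real y, |∑_{k=1}^K sin(2πky)/(πk) + ψ(y)| ≤ min(1/2, 1/((2K+1)π |sin(πy)|)). -/
open scoped Classical

/-- The sawtooth function: `ψ(y) = {y} - 1/2` for `y ∉ ℤ`, and `ψ(y) = 0` for `y ∈ ℤ`. -/
noncomputable def sawtooth (y : ℝ) : ℝ :=
  if ∃ m : ℤ, y = (m : ℝ) then 0 else Int.fract y - 1 / 2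

/-!
On `(0, 1)` the quantity to bound is `E(x) = x - 1/2 + S_K(x)`, where `S_K` is the sine sum,
and `E(1 - x) = -E(x)`, so it suffices to take `0 < x < 1/2`. With `θ = 2πx`, write
`sin(kθ)/k = ∫₀¹ r^(k-1) sin(kθ) dr` and sum the geometric series: the main part integrates
to `(π - θ)/2`, which cancels `x - 1/2`, and what remains is
`E(x) = -(1/π) ∫₀¹ r^K (sin((K+1)θ) - r sin(Kθ)) / |e^{iθ} - r|² dr`.
The numerator is at most `|e^{iθ} - r|` and `|e^{iθ} - r|² ≥ 4r sin²(πx)`, so the integrand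
is at most `r^(K-1/2) / (2 sin πx)`, which integrates to the bound `1/((2K+1)π sin πx)`.

By Jordan's inequality that bound is already `≤ 1/2` unless `(2K+1)x < 1`. There one uses
`E' = D_K`, the Dirichlet kernel `sin((2K+1)πt)/sin(πt)`, which lies in `[0, 2K+1]` on `[0, x]`;
hence `E(x) + 1/2 = ∫₀ˣ D_K ∈ [0, 1]`.
-/

open Real Finset

noncomputable def sineSum (K : ℕ) (y : ℝ) : ℝ :=
  ∑ k ∈ Icc 1 K, sin (2 * π * k * y) / (π * k)

noncomputable def sawtoothError (K : ℕ) (x : ℝ) : ℝ :=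
  x - 1 / 2 + sineSum K x

noncomputable def dirichletKernel (K : ℕ) (t : ℝ) : ℝ :=
  1 + 2 * ∑ k ∈ Icc 1 K, cos (2 * π * k * t)

theorem sineSum_zero (K : ℕ) : sineSum K 0 = 0 := by
  simp [sineSum]

theorem sineSum_neg (K : ℕ) (y : ℝ) : sineSum K (-y) = -sineSum K y := by
  simp only [sineSum, ← sum_neg_distrib, mul_neg, sin_neg, neg_div]

theorem sineSum_periodic (K : ℕ) : Function.Periodic (sineSum K) 1 := fun y => by
  refine sum_congr rfl fun k _ => ?_
  rw [show 2 * π * k * (y + 1) = 2 * π * k * y + k * (2 * π) by ring, sin_add_nat_mul_two_pi]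

theorem sineSum_intCast (K : ℕ) (m : ℤ) : sineSum K m = 0 := by
  simpa [sineSum_zero] using (sineSum_periodic K).int_mul_eq m

theorem sineSum_fract (K : ℕ) (y : ℝ) : sineSum K (Int.fract y) = sineSum K y := by
  simpa using (sineSum_periodic K).sub_int_mul_eq (x := y) ⌊y⌋

theorem abs_sin_pi_mul_fract (y : ℝ) : |sin (π * Int.fract y)| = |sin (π * y)| := by
  rw [← Int.self_sub_floor, mul_sub, mul_comm π (⌊y⌋ : ℝ), sin_sub_int_mul_pi, abs_mul,
    abs_neg_one_zpow, one_mul]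

theorem sawtoothError_one_sub (K : ℕ) (x : ℝ) :
    sawtoothError K (1 - x) = -sawtoothError K x := by
  rw [sawtoothError, sawtoothError, (sineSum_periodic K).sub_eq', sineSum_neg]
  ring

theorem hasDerivAt_sineSum (K : ℕ) (t : ℝ) :
    HasDerivAt (sineSum K) (2 * ∑ k ∈ Icc 1 K, cos (2 * π * k * t)) t := by
  rw [mul_sum]
  refine HasDerivAt.fun_sum fun k hk => ?_
  have hk : (k : ℝ) ≠ 0 := by
    have := (mem_Icc.mp hk).1
    positivity
  refine (((hasDerivAt_id' t).const_mul (2 * π * k)).sin.div_const (π * k)).congr_deriv ?_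
  field_simp

theorem continuous_dirichletKernel (K : ℕ) : Continuous (dirichletKernel K) := by
  unfold dirichletKernel
  fun_prop

theorem integral_dirichletKernel (K : ℕ) (a b : ℝ) :
    ∫ t in a..b, dirichletKernel K t = (b + sineSum K b) - (a + sineSum K a) :=
  intervalIntegral.integral_eq_sub_of_hasDerivAt
    (fun t _ => (hasDerivAt_id t).add (hasDerivAt_sineSum K t))
    ((continuous_dirichletKernel K).intervalIntegrable _ _)

theorem sin_mul_dirichletKernel (K : ℕ) (t : ℝ) :
    sin (π * t) * dirichletKernel K t = sin ((2 * K + 1) * π * t) := by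
  induction K with
  | zero => simp [dirichletKernel]
  | succ K ih =>
    have telescope : sin (π * t) * (2 * cos (2 * π * (K + 1 : ℕ) * t)) =
        sin ((2 * (K + 1 : ℕ) + 1) * π * t) - sin ((2 * K + 1) * π * t) := by
      push_cast
      rw [show (2 * (K + 1 : ℝ) + 1) * π * t = 2 * π * (K + 1) * t + π * t by ring,
        show (2 * K + 1 : ℝ) * π * t = 2 * π * (K + 1) * t - π * t by ring, sin_add, sin_sub]
      ring
    rw [dirichletKernel] at ih ⊢
    rw [sum_Icc_succ_top (by omega)]
    linear_combination ih + telescope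

theorem dirichletKernel_le (K : ℕ) (t : ℝ) : dirichletKernel K t ≤ 2 * K + 1 := by
  have : ∑ k ∈ Icc 1 K, cos (2 * π * k * t) ≤ ∑ k ∈ Icc 1 K, (1 : ℝ) :=
    sum_le_sum fun k _ => cos_le_one _
  simp only [sum_const, Nat.card_Icc, add_tsub_cancel_right, nsmul_eq_mul, mul_one] at this
  rw [dirichletKernel]
  linarith

theorem dirichletKernel_nonneg {K : ℕ} {t : ℝ} (ht0 : 0 ≤ t) (ht1 : t < 1)
    (ht : (2 * K + 1) * t ≤ 1) : 0 ≤ dirichletKernel K t := by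
  rcases ht0.eq_or_lt with rfl | ht0
  · simp only [dirichletKernel, mul_zero, cos_zero, sum_const, Nat.card_Icc]
    positivity
  have hsin : 0 < sin (π * t) := sin_pos_of_pos_of_lt_pi (by positivity) (by nlinarith [pi_pos])
  have hnum : 0 ≤ sin ((2 * K + 1) * π * t) :=
    sin_nonneg_of_nonneg_of_le_pi (by positivity) (by nlinarith [pi_pos])
  rw [← sin_mul_dirichletKernel] at hnum
  exact nonneg_of_mul_nonneg_right hnum hsin

theorem abs_sawtoothError_le_half_of_mul_le_one {K : ℕ} {x : ℝ} (hx0 : 0 ≤ x) (hx1 : x < 1)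
    (hx : (2 * K + 1) * x ≤ 1) : |sawtoothError K x| ≤ 1 / 2 := by
  have hint : ∫ t in 0..x, dirichletKernel K t = x + sineSum K x := by
    rw [integral_dirichletKernel, sineSum_zero]
    ring
  have hlo : 0 ≤ ∫ t in 0..x, dirichletKernel K t :=
    intervalIntegral.integral_nonneg hx0 fun t ht =>
      dirichletKernel_nonneg ht.1 (ht.2.trans_lt hx1)
        ((mul_le_mul_of_nonneg_left ht.2 (by positivity)).trans hx)
  have hhi : ∫ t in 0..x, dirichletKernel K t ≤ (2 * K + 1) * x := by
    calc ∫ t in 0..x, dirichletKernel K t ≤ ∫ _ in 0..x, (2 * K + 1 : ℝ) :=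
          intervalIntegral.integral_mono_on hx0
            ((continuous_dirichletKernel K).intervalIntegrable _ _)
            intervalIntegrable_const fun t _ => dirichletKernel_le K t
      _ = (2 * K + 1) * x := by
          simp only [intervalIntegral.integral_const, sub_zero, smul_eq_mul, mul_comm]
  rw [sawtoothError, abs_le]
  constructor <;> linarith

noncomputable def poissonDenom (θ r : ℝ) : ℝ :=
  1 - 2 * r * cos θ + r ^ 2

noncomputable def abelRemainder (K : ℕ) (θ r : ℝ) : ℝ :=
  r ^ K * (sin ((K + 1) * θ) - r * sin (K * θ)) / poissonDenom θ r

theorem continuous_poissonDenom (θ : ℝ) : Continuous (poissonDenom θ) := by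
  unfold poissonDenom
  fun_prop

theorem poissonDenom_eq_sq_add_sin_sq (θ r : ℝ) :
    poissonDenom θ r = (r - cos θ) ^ 2 + sin θ ^ 2 := by
  rw [poissonDenom]
  linear_combination -sin_sq_add_cos_sq θ

theorem poissonDenom_eq_sq_add_mul_sin_half_sq (θ r : ℝ) :
    poissonDenom θ r = (1 - r) ^ 2 + 4 * r * sin (θ / 2) ^ 2 := by
  rw [poissonDenom, sin_sq_eq_half_sub, mul_div_cancel₀ θ two_ne_zero]
  ring

theorem poissonDenom_pos {θ : ℝ} (hθ : sin θ ≠ 0) (r : ℝ) : 0 < poissonDenom θ r := by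
  rw [poissonDenom_eq_sq_add_sin_sq]
  positivity

-- `poissonDenom θ r = |e^{iθ} - r|²`, and the left side is the square of the imaginary part of
-- `e^{isθ}(e^{iθ} - r)`.
theorem sq_sin_add_sub_mul_sin_le_poissonDenom (θ r s : ℝ) :
    (sin (s + θ) - r * sin s) ^ 2 ≤ poissonDenom θ r := by
  have hcos : cos θ = cos (s + θ) * cos s + sin (s + θ) * sin s := by
    rw [← cos_sub, add_sub_cancel_left]
  have := sq_nonneg (cos (s + θ) - r * cos s)
  rw [poissonDenom, hcos]
  nlinarith [sin_sq_add_cos_sq (s + θ), sin_sq_add_cos_sq s]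

theorem poissonDenom_mul_sum_pow_mul_sin (K : ℕ) (θ r : ℝ) :
    poissonDenom θ r * ∑ k ∈ Icc 1 K, r ^ (k - 1) * sin (k * θ) =
      sin θ - r ^ K * (sin ((K + 1) * θ) - r * sin (K * θ)) := by
  induction K with
  | zero => simp
  | succ K ih =>
    have hsin : sin ((K + 1 + 1) * θ) + sin (K * θ) = 2 * sin ((K + 1) * θ) * cos θ := by
      rw [show (K + 1 + 1) * θ = (K + 1) * θ + θ by ring,
        show K * θ = (K + 1) * θ - θ by ring, sin_add, sin_sub]
      ring
    rw [sum_Icc_succ_top (by omega), mul_add, ih, Nat.add_sub_cancel, poissonDenom]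
    push_cast
    linear_combination r ^ (K + 1) * hsin

theorem hasDerivAt_arctan_sub_cos_div_sin {θ : ℝ} (hθ : sin θ ≠ 0) (r : ℝ) :
    HasDerivAt (fun s => arctan ((s - cos θ) / sin θ)) (sin θ / poissonDenom θ r) r := by
  refine ((((hasDerivAt_id' r).sub_const (cos θ)).div_const (sin θ)).arctan).congr_deriv ?_
  have hQ := (poissonDenom_pos hθ r).ne'
  rw [poissonDenom_eq_sq_add_sin_sq] at hQ ⊢
  field_simp
  ring

theorem integral_sin_div_poissonDenom {θ : ℝ} (hθ0 : 0 < θ) (hθ : θ < π) :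
    ∫ r in 0..1, sin θ / poissonDenom θ r = (π - θ) / 2 := by
  have hsin := (sin_pos_of_pos_of_lt_pi hθ0 hθ).ne'
  have hcont : Continuous fun r => sin θ / poissonDenom θ r :=
    continuous_const.div (continuous_poissonDenom θ) fun r => (poissonDenom_pos hsin r).ne'
  rw [intervalIntegral.integral_eq_sub_of_hasDerivAt
    (fun r _ => hasDerivAt_arctan_sub_cos_div_sin hsin r) (hcont.intervalIntegrable 0 1)]
  have h0 : (0 - cos θ) / sin θ = tan (θ - π / 2) := by
    rw [tan_eq_sin_div_cos, sin_sub_pi_div_two, cos_sub_pi_div_two, zero_sub, neg_div]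
  have h1 : (1 - cos θ) / sin θ = tan (θ / 2) := by
    have hc : cos (θ / 2) ≠ 0 := (cos_pos_of_mem_Ioo ⟨by linarith, by linarith⟩).ne'
    rw [tan_eq_sin_div_cos, div_eq_div_iff hsin hc]
    have hs : sin θ = 2 * sin (θ / 2) * cos (θ / 2) := by
      rw [← sin_two_mul, mul_div_cancel₀ θ two_ne_zero]
    have hc2 : cos θ = 2 * cos (θ / 2) ^ 2 - 1 := by
      rw [← cos_two_mul, mul_div_cancel₀ θ two_ne_zero]
    rw [hs, hc2]
    linear_combination (-2 * cos (θ / 2)) * sin_sq_add_cos_sq (θ / 2)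
  rw [h0, h1, arctan_tan (by linarith) (by linarith), arctan_tan (by linarith) (by linarith)]
  ring

theorem sum_sin_mul_div_eq_integral (K : ℕ) {θ : ℝ} (hθ0 : 0 < θ) (hθ : θ < π) :
    ∑ k ∈ Icc 1 K, sin (k * θ) / k = (π - θ) / 2 - ∫ r in 0..1, abelRemainder K θ r := by
  have hQ := poissonDenom_pos (sin_pos_of_pos_of_lt_pi hθ0 hθ).ne'
  have hterm : ∀ k ∈ Icc 1 K, sin (k * θ) / k = ∫ r in 0..1, r ^ (k - 1) * sin (k * θ) := by
    intro k hk
    rw [intervalIntegral.integral_mul_const, integral_pow, Nat.cast_pred (mem_Icc.mp hk).1]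
    simp [div_eq_inv_mul]
  have hgeom : ∀ r, ∑ k ∈ Icc 1 K, r ^ (k - 1) * sin (k * θ) =
      sin θ / poissonDenom θ r - abelRemainder K θ r := fun r => by
    rw [abelRemainder, ← sub_div, eq_div_iff (hQ r).ne', mul_comm,
      poissonDenom_mul_sum_pow_mul_sin]
  calc ∑ k ∈ Icc 1 K, sin (k * θ) / k
      = ∫ r in 0..1, ∑ k ∈ Icc 1 K, r ^ (k - 1) * sin (k * θ) := by
        rw [intervalIntegral.integral_finsetSum (f := fun (k : ℕ) r => r ^ (k - 1) * sin (k * θ))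
          fun k _ => (by fun_prop : Continuous _).intervalIntegrable 0 1]
        exact sum_congr rfl hterm
    _ = ∫ r in 0..1, (sin θ / poissonDenom θ r - abelRemainder K θ r) := by
        simp only [hgeom]
    _ = (π - θ) / 2 - ∫ r in 0..1, abelRemainder K θ r := by
        rw [intervalIntegral.integral_sub, integral_sin_div_poissonDenom hθ0 hθ]
        all_goals
          exact (Continuous.div (by fun_prop) (continuous_poissonDenom θ)
            fun r => (hQ r).ne').intervalIntegrable 0 1

theorem abs_abelRemainder_le (K : ℕ) {θ r : ℝ} (hθ : 0 < sin (θ / 2)) (hr : 0 < r) :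
    |abelRemainder K θ r| ≤ r ^ ((K : ℝ) - 1 / 2) / (2 * sin (θ / 2)) := by
  have hQa : (2 * sin (θ / 2) * √r) ^ 2 ≤ poissonDenom θ r := by
    rw [mul_pow, sq_sqrt hr.le, poissonDenom_eq_sq_add_mul_sin_half_sq]
    nlinarith [sq_nonneg (1 - r)]
  set a := sin (θ / 2)
  set N := sin ((K + 1) * θ) - r * sin (K * θ)
  set Q := poissonDenom θ r
  have hQ : 0 < Q := lt_of_lt_of_le (by positivity) hQa
  have hN : |N| ≤ √Q := abs_le_sqrt <| by
    simpa only [N, add_mul, one_mul, add_comm θ] using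
      sq_sin_add_sub_mul_sin_le_poissonDenom θ r (K * θ)
  have hNQ : |N| * (2 * a * √r) ≤ Q := by
    calc |N| * (2 * a * √r) ≤ √Q * √Q :=
          mul_le_mul hN (le_sqrt_of_sq_le hQa) (by positivity) (sqrt_nonneg _)
      _ = Q := mul_self_sqrt hQ.le
  have hrpow : r ^ ((K : ℝ) - 1 / 2) = r ^ K / √r := by
    rw [rpow_sub hr, sqrt_eq_rpow, rpow_natCast]
  rw [abelRemainder, abs_div, abs_mul, abs_of_pos hQ, abs_of_pos (pow_pos hr K), hrpow,
    div_div, div_le_div_iff₀ hQ (by positivity)]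
  calc r ^ K * |N| * (√r * (2 * a)) = r ^ K * (|N| * (2 * a * √r)) := by ring
    _ ≤ r ^ K * Q := by gcongr

theorem abs_integral_abelRemainder_le (K : ℕ) {θ : ℝ} (hθ : 0 < sin (θ / 2)) :
    |∫ r in 0..1, abelRemainder K θ r| ≤ 1 / ((2 * K + 1) * sin (θ / 2)) := by
  have hexp : -1 < (K : ℝ) - 1 / 2 := by
    have := K.cast_nonneg (α := ℝ)
    linarith
  calc |∫ r in 0..1, abelRemainder K θ r|
      ≤ ∫ r in 0..1, r ^ ((K : ℝ) - 1 / 2) / (2 * sin (θ / 2)) := by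
        rw [← Real.norm_eq_abs]
        exact intervalIntegral.norm_integral_le_of_norm_le zero_le_one
          (Filter.Eventually.of_forall fun r hr => abs_abelRemainder_le K hθ hr.1)
          ((intervalIntegral.intervalIntegrable_rpow' hexp).div_const _)
    _ = 1 / ((2 * K + 1) * sin (θ / 2)) := by
        rw [intervalIntegral.integral_div, integral_rpow (Or.inl hexp), one_rpow,
          zero_rpow (by linarith), sub_zero, show (K : ℝ) - 1 / 2 + 1 = (2 * K + 1) / 2 by ring]
        field_simp

theorem sawtoothError_eq_integral (K : ℕ) {x : ℝ} (hx0 : 0 < x) (hx : x < 1 / 2) :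
    sawtoothError K x = -π⁻¹ * ∫ r in 0..1, abelRemainder K (2 * π * x) r := by
  have hS : sineSum K x = π⁻¹ * ∑ k ∈ Icc 1 K, sin (k * (2 * π * x)) / k := by
    rw [sineSum, mul_sum]
    refine sum_congr rfl fun k _ => ?_
    rw [show (k : ℝ) * (2 * π * x) = 2 * π * k * x by ring]
    ring
  rw [sawtoothError, hS, sum_sin_mul_div_eq_integral K (by positivity) (by nlinarith [pi_pos])]
  field_simp
  ring

theorem abs_sawtoothError_le_of_lt_half (K : ℕ) {x : ℝ} (hx0 : 0 < x) (hx : x < 1 / 2) :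
    |sawtoothError K x| ≤ 1 / ((2 * K + 1) * π * sin (π * x)) := by
  have hhalf : 2 * π * x / 2 = π * x := by ring
  have hsin : 0 < sin (π * x) := sin_pos_of_pos_of_lt_pi (by positivity) (by nlinarith [pi_pos])
  have hint := abs_integral_abelRemainder_le K (θ := 2 * π * x) (by rwa [hhalf])
  rw [hhalf] at hint
  rw [sawtoothError_eq_integral K hx0 hx, abs_mul, abs_neg, abs_inv, abs_of_pos pi_pos]
  calc π⁻¹ * |∫ r in 0..1, abelRemainder K (2 * π * x) r|
      ≤ π⁻¹ * (1 / ((2 * K + 1) * sin (π * x))) := by gcongr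
    _ = 1 / ((2 * K + 1) * π * sin (π * x)) := by
        field_simp

theorem abs_sawtoothError_le_half_of_lt_half (K : ℕ) {x : ℝ} (hx0 : 0 < x) (hx : x < 1 / 2) :
    |sawtoothError K x| ≤ 1 / 2 := by
  rcases le_or_gt ((2 * K + 1) * x) 1 with hsmall | hlarge
  · exact abs_sawtoothError_le_half_of_mul_le_one hx0.le (by linarith) hsmall
  have hjordan : 2 * x ≤ sin (π * x) := by
    have := mul_le_sin (x := π * x) (by positivity) (by nlinarith [pi_pos])
    rwa [← mul_assoc, div_mul_cancel₀ _ pi_ne_zero] at this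
  calc |sawtoothError K x| ≤ 1 / ((2 * K + 1) * π * sin (π * x)) :=
        abs_sawtoothError_le_of_lt_half K hx0 hx
    _ ≤ 1 / 2 := one_div_le_one_div_of_le two_pos <| by
        have hcoef : (0 : ℝ) ≤ (2 * K + 1) * π := by positivity
        nlinarith [pi_gt_three, mul_le_mul_of_nonneg_left hjordan hcoef]

theorem abs_sawtoothError_le (K : ℕ) {x : ℝ} (hx0 : 0 < x) (hx1 : x < 1) :
    |sawtoothError K x| ≤ 1 / 2 ∧
      |sawtoothError K x| ≤ 1 / ((2 * K + 1) * π * |sin (π * x)|) := by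
  wlog hx : x ≤ 1 / 2 generalizing x
  · have h := this (x := 1 - x) (by linarith) (by linarith) (by linarith)
    rwa [sawtoothError_one_sub, abs_neg, mul_one_sub, sin_pi_sub] at h
  rcases hx.lt_or_eq with hx | rfl
  · rw [abs_of_pos (sin_pos_of_pos_of_lt_pi (by positivity) (by nlinarith [pi_pos]))]
    exact ⟨abs_sawtoothError_le_half_of_lt_half K hx0 hx,
      abs_sawtoothError_le_of_lt_half K hx0 hx⟩
  · have h := sawtoothError_one_sub K (1 / 2)
    rw [show (1 : ℝ) - 1 / 2 = 1 / 2 by norm_num] at h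
    rw [show sawtoothError K (1 / 2) = 0 by linarith, abs_zero]
    exact ⟨by norm_num, by positivity⟩

theorem stmt_13_general (K : ℕ) (y : ℝ) :
    |(∑ k ∈ Finset.Icc 1 K, Real.sin (2 * Real.pi * k * y) / (Real.pi * k)) +
        sawtooth y| ≤ 1 / 2 ∧
    (Real.sin (Real.pi * y) ≠ 0 →
      |(∑ k ∈ Finset.Icc 1 K, Real.sin (2 * Real.pi * k * y) / (Real.pi * k)) +
          sawtooth y| ≤
        1 / ((2 * K + 1) * Real.pi * |Real.sin (Real.pi * y)|)) := by
  change |sineSum K y + sawtooth y| ≤ 1 / 2 ∧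
    (sin (π * y) ≠ 0 → |sineSum K y + sawtooth y| ≤ 1 / ((2 * K + 1) * π * |sin (π * y)|))
  by_cases hy : ∃ m : ℤ, y = m
  · obtain ⟨m, rfl⟩ := hy
    refine ⟨by simp [sawtooth, sineSum_intCast], fun h => absurd ?_ h⟩
    rw [mul_comm, sin_int_mul_pi]
  · have hE : sineSum K y + sawtooth y = sawtoothError K (Int.fract y) := by
      rw [sawtooth, if_neg hy, sawtoothError, sineSum_fract]
      ring
    have hfract : 0 < Int.fract y := Int.fract_pos.mpr fun h => hy ⟨⌊y⌋, h⟩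
    obtain ⟨hhalf, hsin⟩ := abs_sawtoothError_le K hfract (Int.fract_lt_one y)
    rw [hE, ← abs_sin_pi_mul_fract]
    exact ⟨hhalf, fun _ => hsin⟩

/-- for every positive `K` and real `y`,
`|∑_{k=1}^K sin(2πky)/(πk) + ψ(y)| ≤ min(1/2, 1/((2K+1)π|sin(πy)|))`
(the second bound being interpreted as `+∞` when `sin(πy) = 0`). -/
theorem stmt_13 (K : ℕ) (hK : 1 ≤ K) (y : ℝ) :
    |(∑ k ∈ Finset.Icc 1 K, Real.sin (2 * Real.pi * k * y) / (Real.pi * k)) +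
        sawtooth y| ≤ 1 / 2 ∧
    (Real.sin (Real.pi * y) ≠ 0 →
      |(∑ k ∈ Finset.Icc 1 K, Real.sin (2 * Real.pi * k * y) / (Real.pi * k)) +
          sawtooth y| ≤
        1 / ((2 * K + 1) * Real.pi * |Real.sin (Real.pi * y)|)) :=
  stmt_13_general K y
end

section
/- Let F be a real-valued differentiable function on [a, b] with F' monotonic (first derivative test): if |F'(x)| ≥ M > 0 for all x ∈ [a, b], then |∫_a^b e^{iF(x)} dx| ≤ 4/M. -/
open Complex intervalIntegral

open MeasureTheory Set

lemma core_mono (F F' : ℝ → ℝ) (a b M : ℝ) (hab : a ≤ b) (hM : 0 < M)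
    (hderiv : ∀ x ∈ Set.Icc a b, HasDerivAt F (F' x) x)
    (hmono : MonotoneOn F' (Set.Icc a b))
    (hbound : ∀ x ∈ Set.Icc a b, M ≤ F' x) :
    ‖∫ x in a..b, Complex.exp (I * (F x : ℂ))‖ ≤ 2 / M := by
  -- clamp function
  set c : ℝ → ℝ := fun x => max a (min b x) with hc_def
  have hc_mem : ∀ x, c x ∈ Icc a b := fun x =>
    ⟨le_max_left _ _, max_le hab (min_le_left _ _)⟩
  have hc_mono : Monotone c := fun x y h =>
    max_le_max le_rfl (min_le_min le_rfl h)
  have hc_cont : Continuous c := continuous_const.max (continuous_const.min continuous_id)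
  have hc_eq : ∀ x ∈ Icc a b, c x = x := fun x hx => by
    simp [hc_def, min_eq_right hx.2, max_eq_right hx.1]
  set φ : ℝ → ℝ := fun x => F' (c x) with hφ_def
  have hφ_mono : Monotone φ := fun x y h => hmono (hc_mem x) (hc_mem y) (hc_mono h)
  have hφ_meas : Measurable φ := hφ_mono.measurable
  have hφ_ge : ∀ x, M ≤ φ x := fun x => hbound _ (hc_mem x)
  have hφ_pos : ∀ x, 0 < φ x := fun x => hM.trans_le (hφ_ge x)
  set B : ℝ := F' b with hB_def
  have hφ_le : ∀ x, φ x ≤ B := fun x =>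
    hmono (hc_mem x) (right_mem_Icc.2 hab) (hc_mem x).2
  set Fc : ℝ → ℝ := fun x => F (c x) with hFc_def
  have hFc_cont : Continuous Fc := by
    rw [continuous_iff_continuousAt]
    intro x
    exact ((hderiv (c x) (hc_mem x)).continuousAt).comp hc_cont.continuousAt
  set h : ℝ → ℂ := fun x => (φ x : ℂ) * Complex.exp (I * (Fc x : ℂ)) with hh_def
  have hh_meas : Measurable h := by
    apply (Complex.measurable_ofReal.comp hφ_meas).mul
    exact (Complex.continuous_exp.comp (continuous_const.mul
      (Complex.continuous_ofReal.comp hFc_cont))).measurable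
  have hh_norm : ∀ x, ‖h x‖ = φ x := by
    intro x
    rw [hh_def]
    simp only [norm_mul, Complex.norm_exp]
    simp [abs_of_pos (hφ_pos x)]
  have hh_bdd : ∀ x, ‖h x‖ ≤ B := fun x => (hh_norm x).le.trans (hφ_le x)
  -- FTC claim
  have claim2 : ∀ s ∈ Icc a b, ‖∫ x in a..s, h x‖ ≤ 2 := by
    intro s hs
    have has : a ≤ s := hs.1
    have hsub : Icc a s ⊆ Icc a b := Icc_subset_Icc le_rfl hs.2
    have hcongr : ∫ x in a..s, h x
        = ∫ x in a..s, (F' x : ℂ) * Complex.exp (I * (F x : ℂ)) := by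
      apply intervalIntegral.integral_congr
      intro x hx
      rw [uIcc_of_le has] at hx
      have hx' : x ∈ Icc a b := hsub hx
      simp [hh_def, hφ_def, hFc_def, hc_eq x hx']
    have hint : IntervalIntegrable (fun x => (F' x : ℂ) * Complex.exp (I * (F x : ℂ)))
        MeasureTheory.volume a s := by
      rw [intervalIntegrable_iff_integrableOn_Ioc_of_le has]
      have hIoc : Set.Ioc a s ⊆ Icc a b := Ioc_subset_Icc_self.trans hsub
      have : IntegrableOn h (Ioc a s) := by
        refine Integrable.mono' (g := fun _ => B) ?_ ?_ ?_
        · exact integrableOn_const measure_Ioc_lt_top.ne enorm_ne_top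
        · exact hh_meas.aestronglyMeasurable.restrict
        · exact Filter.Eventually.of_forall fun x => hh_bdd x
      apply this.congr_fun ?_ measurableSet_Ioc
      intro x hx
      have hx' : x ∈ Icc a b := hIoc hx
      simp [hh_def, hφ_def, hFc_def, hc_eq x hx']
    have hftc : ∫ x in a..s, (F' x : ℂ) * Complex.exp (I * (F x : ℂ))
        = (-I) * Complex.exp (I * (F s : ℂ)) - (-I) * Complex.exp (I * (F a : ℂ)) := by
      apply intervalIntegral.integral_eq_sub_of_hasDerivAt
      · intro x hx
        rw [uIcc_of_le has] at hx
        have hx' : x ∈ Icc a b := hsub hx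
        have h1 : HasDerivAt (fun y => (F y : ℂ)) (F' x : ℂ) x := (hderiv x hx').ofReal_comp
        have h2 : HasDerivAt (fun y => I * (F y : ℂ)) (I * (F' x : ℂ)) x := h1.const_mul I
        have h3 := h2.cexp
        have h4 := h3.const_mul (-I)
        refine h4.congr_deriv ?_
        symm
        rw [mul_comm (Complex.exp _)]
        rw [show (-I) * (I * (F' x : ℂ) * Complex.exp (I * (F x : ℂ)))
            = (-(I*I)) * ((F' x : ℂ) * Complex.exp (I * (F x : ℂ))) by ring]
        rw [Complex.I_mul_I]
        ring
      · exact hint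
    rw [hcongr, hftc]
    have he : ∀ r : ℝ, ‖Complex.exp (I * (r:ℂ))‖ = 1 := by
      intro r; rw [mul_comm]; exact Complex.norm_exp_ofReal_mul_I r
    rw [← mul_sub, norm_mul]
    have : ‖(-I : ℂ)‖ = 1 := by simp
    rw [this, one_mul]
    calc ‖Complex.exp (I * (F s : ℂ)) - Complex.exp (I * (F a : ℂ))‖
        ≤ ‖Complex.exp (I * (F s : ℂ))‖ + ‖Complex.exp (I * (F a : ℂ))‖ := norm_sub_le _ _
      _ = 2 := by rw [he, he]; norm_num
  -- layer cake / Fubini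
  set g : ℝ → ℝ := fun x => (φ x)⁻¹ with hg_def
  have hg_meas : Measurable g := hφ_meas.inv
  have hg_pos : ∀ x, 0 < g x := fun x => inv_pos.2 (hφ_pos x)
  have hg_le : ∀ x, g x ≤ M⁻¹ := fun x => by
    rw [hg_def]; exact inv_anti₀ hM (hφ_ge x)
  have hg_anti : Antitone g := fun x y hxy =>
    inv_anti₀ (hφ_pos x) (hφ_mono hxy)
  set S : Set (ℝ × ℝ) := {p | 0 < p.2 ∧ p.2 < g p.1} with hS_def
  have hS_meas : MeasurableSet S :=
    (measurableSet_lt measurable_const measurable_snd).inter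
      (measurableSet_lt measurable_snd (hg_meas.comp measurable_fst))
  set Ψ : ℝ × ℝ → ℂ := S.indicator (fun p => h p.1) with hΨ_def
  set μ : Measure (ℝ × ℝ) := (volume.restrict (Ioc a b)).prod volume with hμ_def
  have hB_nonneg : (0:ℝ) ≤ B := le_trans hM.le ((hφ_ge b).trans (hφ_le b))
  have stepA : ∀ x, (∫ t, Ψ (x, t)) = g x • h x := by
    intro x
    have heq : (fun t => Ψ (x, t)) = (Ioo 0 (g x)).indicator (fun _ => h x) := by
      funext t
      by_cases ht : (x, t) ∈ S
      · rw [hΨ_def, Set.indicator_of_mem ht, Set.indicator_of_mem]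
        exact ⟨ht.1, ht.2⟩
      · rw [hΨ_def, Set.indicator_of_notMem ht, Set.indicator_of_notMem]
        intro hmem; exact ht ⟨hmem.1, hmem.2⟩
    rw [heq, integral_indicator_const _ measurableSet_Ioo, measureReal_def, Real.volume_Ioo, sub_zero,
      ENNReal.toReal_ofReal (hg_pos x).le]
  have hΨ_int : Integrable Ψ μ := by
    refine Integrable.mono'
      (g := fun p => ((Ioc a b) ×ˢ (Ioc 0 M⁻¹)).indicator (fun _ => B) p) ?_ ?_ ?_
    · rw [integrable_indicator_iff (measurableSet_Ioc.prod measurableSet_Ioc)]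
      refine integrableOn_const (ne_of_lt ?_) enorm_ne_top
      rw [hμ_def, Measure.prod_prod, Measure.restrict_apply measurableSet_Ioc,
        Set.inter_self]
      exact ENNReal.mul_lt_top measure_Ioc_lt_top measure_Ioc_lt_top
    · exact ((hh_meas.comp measurable_fst).indicator hS_meas).aestronglyMeasurable
    · have hae : ∀ᵐ p ∂μ, p.1 ∈ Ioc a b := by
        rw [ae_iff]
        have hset : {p : ℝ × ℝ | ¬ p.1 ∈ Ioc a b} = ((Ioc a b)ᶜ) ×ˢ (univ : Set ℝ) := by
          ext p; simp
        rw [hμ_def, hset, Measure.prod_prod, Measure.restrict_apply measurableSet_Ioc.compl]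
        simp
      filter_upwards [hae] with p hp
      by_cases hpS : p ∈ S
      · rw [hΨ_def, Set.indicator_of_mem hpS, Set.indicator_of_mem]
        · exact hh_bdd p.1
        · exact ⟨hp, hpS.1, (hpS.2.trans_le (hg_le p.1)).le⟩
      · rw [hΨ_def, Set.indicator_of_notMem hpS]
        simpa using Set.indicator_nonneg (fun _ _ => hB_nonneg) p
  have hswap : (∫ x in Ioc a b, ∫ t, Ψ (x, t)) = ∫ t, ∫ x in Ioc a b, Ψ (x, t) := by
    exact MeasureTheory.integral_integral_swap (f := fun x t => Ψ (x, t))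
      (by exact hΨ_int)
  have hvanish : ∀ t, t ∉ Ioc (0:ℝ) M⁻¹ → (∫ x in Ioc a b, Ψ (x, t)) = 0 := by
    intro t ht
    have hz : ∀ x, Ψ (x, t) = 0 := by
      intro x
      apply Set.indicator_of_notMem
      intro hmem
      exact ht ⟨hmem.1, le_trans hmem.2.le (hg_le x)⟩
    simp [hz]
  have stepD : ∀ t : ℝ, 0 < t → ‖∫ x in Ioc a b, Ψ (x, t)‖ ≤ 2 := by
    intro t ht
    have hE_meas : MeasurableSet {x : ℝ | t < g x} :=
      measurableSet_lt measurable_const hg_meas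
    have hrw : ∀ x, Ψ (x, t) = Set.indicator {x : ℝ | t < g x} h x := by
      intro x
      by_cases hx : t < g x
      · rw [hΨ_def, Set.indicator_of_mem (show (x, t) ∈ S from ⟨ht, hx⟩),
          Set.indicator_of_mem (show x ∈ {x : ℝ | t < g x} from hx)]
      · rw [hΨ_def, Set.indicator_of_notMem (show (x, t) ∉ S from fun hmem => hx hmem.2),
          Set.indicator_of_notMem (show x ∉ {x : ℝ | t < g x} from hx)]
    rw [show (∫ x in Ioc a b, Ψ (x, t)) = ∫ x in Ioc a b, Set.indicator {x | t < g x} h x from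
      by congr 1; funext x; exact hrw x]
    rw [setIntegral_indicator hE_meas]
    set T := Ioc a b ∩ {x : ℝ | t < g x} with hT_def
    have hTsub : T ⊆ Ioc a b := Set.inter_subset_left
    have hT_lower : ∀ x ∈ T, ∀ y ∈ Ioc a x, y ∈ T := by
      rintro x ⟨hx1, hx2⟩ y ⟨hy1, hy2⟩
      exact ⟨⟨hy1, hy2.trans hx1.2⟩, lt_of_lt_of_le hx2 (hg_anti hy2)⟩
    rcases Set.eq_empty_or_nonempty T with hTe | ⟨x0, hx0⟩
    · rw [hTe]; simp
    have hbdd : BddAbove T := ⟨b, fun x hx => (hTsub hx).2⟩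
    set s := sSup T with hs_def
    have has : a ≤ s := le_of_lt (lt_of_lt_of_le (hTsub hx0).1 (le_csSup hbdd hx0))
    have hsb : s ≤ b := csSup_le ⟨x0, hx0⟩ fun x hx => (hTsub hx).2
    have h1 : T ⊆ Ioc a s := fun x hx => ⟨(hTsub hx).1, le_csSup hbdd hx⟩
    have h2 : Ioo a s ⊆ T := by
      intro y hy
      obtain ⟨x, hxT, hyx⟩ := exists_lt_of_lt_csSup ⟨x0, hx0⟩ hy.2
      exact hT_lower x hxT y ⟨hy.1, hyx.le⟩
    have hTae : T =ᵐ[volume] Ioc a s := by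
      rw [MeasureTheory.ae_eq_set]
      constructor
      · have hempty : T \ Ioc a s = ∅ := by
          ext x
          simp only [Set.mem_diff, Set.mem_empty_iff_false, iff_false, not_and, not_not]
          exact fun hx1 => h1 hx1
        rw [hempty]; exact measure_empty
      · refine measure_mono_null (t := {s}) (fun x hx => ?_) Real.volume_singleton
        rcases lt_or_eq_of_le hx.1.2 with hlt | heq
        · exact absurd (h2 ⟨hx.1.1, hlt⟩) hx.2
        · exact heq
    rw [setIntegral_congr_set hTae, ← intervalIntegral.integral_of_le has]
    exact claim2 s ⟨has, hsb⟩
  -- assemble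
  have main : (∫ x in a..b, Complex.exp (I * (F x : ℂ)))
      = ∫ t, ∫ x in Ioc a b, Ψ (x, t) := by
    rw [intervalIntegral.integral_of_le hab]
    rw [setIntegral_congr_fun measurableSet_Ioc
      (show ∀ x ∈ Ioc a b, Complex.exp (I * (F x : ℂ)) = g x • h x by
        intro x hx
        have hx' : x ∈ Icc a b := Ioc_subset_Icc_self hx
        rw [hg_def, hh_def, Complex.real_smul, Complex.ofReal_inv]
        rw [← mul_assoc, inv_mul_cancel₀ (by exact_mod_cast (hφ_pos x).ne')]
        rw [one_mul, hFc_def]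
        simp [hc_eq x hx'])]
    rw [show (∫ x in Ioc a b, g x • h x) = ∫ x in Ioc a b, ∫ t, Ψ (x, t) from by
      congr 1; funext x; rw [stepA x]]
    exact hswap
  rw [main]
  have hind : (fun t => ∫ x in Ioc a b, Ψ (x, t))
      = (Ioc (0:ℝ) M⁻¹).indicator (fun t => ∫ x in Ioc a b, Ψ (x, t)) := by
    funext t
    by_cases ht : t ∈ Ioc (0:ℝ) M⁻¹
    · rw [Set.indicator_of_mem ht]
    · rw [Set.indicator_of_notMem ht]; exact hvanish t ht
  rw [hind, MeasureTheory.integral_indicator measurableSet_Ioc]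
  calc ‖∫ t in Ioc (0:ℝ) M⁻¹, ∫ x in Ioc a b, Ψ (x, t)‖
      ≤ 2 * (volume (Ioc (0:ℝ) M⁻¹)).toReal := by
        apply norm_setIntegral_le_of_norm_le_const measure_Ioc_lt_top
        intro t ht
        exact stepD t ht.1
    _ = 2 / M := by
        rw [Real.volume_Ioc, sub_zero, ENNReal.toReal_ofReal (inv_nonneg.2 hM.le)]
        rw [div_eq_mul_inv]

lemma norm_int_exp_neg (F : ℝ → ℝ) (a b : ℝ) :
    ‖∫ x in a..b, Complex.exp (I * ((-F x : ℝ) : ℂ))‖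
      = ‖∫ x in a..b, Complex.exp (I * (F x : ℂ))‖ := by
  have hconj : ∀ x : ℝ, Complex.exp (I * ((-F x : ℝ) : ℂ))
      = (starRingEnd ℂ) (Complex.exp (I * (F x : ℂ))) := by
    intro x
    rw [← Complex.exp_conj]
    congr 1
    rw [map_mul, Complex.conj_I, Complex.conj_ofReal]
    push_cast
    ring
  simp_rw [hconj]
  rw [show (∫ x in a..b, (starRingEnd ℂ) (Complex.exp (I * (F x : ℂ))))
      = (starRingEnd ℂ) (∫ x in a..b, Complex.exp (I * (F x : ℂ))) from by
    rw [intervalIntegral, intervalIntegral, integral_conj, integral_conj, ← map_sub]]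
  exact RCLike.norm_conj _

lemma core_anti (F F' : ℝ → ℝ) (a b M : ℝ) (hab : a ≤ b) (hM : 0 < M)
    (hderiv : ∀ x ∈ Set.Icc a b, HasDerivAt F (F' x) x)
    (hmono : AntitoneOn F' (Set.Icc a b))
    (hbound : ∀ x ∈ Set.Icc a b, M ≤ F' x) :
    ‖∫ x in a..b, Complex.exp (I * (F x : ℂ))‖ ≤ 2 / M := by
  set G : ℝ → ℝ := fun x => -F (a + b - x) with hG
  set G' : ℝ → ℝ := fun x => F' (a + b - x) with hG'
  have hmem : ∀ x ∈ Icc a b, a + b - x ∈ Icc a b := by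
    intro x hx
    exact ⟨by linarith [hx.2], by linarith [hx.1]⟩
  have hderivG : ∀ x ∈ Icc a b, HasDerivAt G (G' x) x := by
    intro x hx
    have hinner : HasDerivAt (fun y : ℝ => a + b - y) (-1) x := by
      simpa using (hasDerivAt_id x).const_sub (a + b)
    have hcomp := ((hderiv _ (hmem x hx)).comp x hinner).neg
    refine hcomp.congr_deriv ?_
    rw [hG']
    ring
  have hmonoG : MonotoneOn G' (Icc a b) := by
    intro x hx y hy hxy
    exact hmono (hmem y hy) (hmem x hx) (by linarith)
  have hboundG : ∀ x ∈ Icc a b, M ≤ G' x := fun x hx => hbound _ (hmem x hx)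
  have hcore := core_mono G G' a b M hab hM hderivG hmonoG hboundG
  have h1 : ‖∫ x in a..b, Complex.exp (I * (G x : ℂ))‖
      = ‖∫ x in a..b, Complex.exp (I * (F (a + b - x) : ℂ))‖ :=
    norm_int_exp_neg (fun x => F (a + b - x)) a b
  have h2 : (∫ x in a..b, Complex.exp (I * (F (a + b - x) : ℂ)))
      = ∫ x in a..b, Complex.exp (I * (F x : ℂ)) := by
    have := intervalIntegral.integral_comp_sub_left
      (a := a) (b := b) (fun u => Complex.exp (I * (F u : ℂ))) (a + b)
    simpa using this
  rw [h1, h2] at hcore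
  exact hcore

/-- first derivative test: if `F` is differentiable on `[a,b]` with
monotonic derivative `F'` satisfying `|F'(x)| ≥ M > 0`, then
`|∫_a^b e^{iF(x)} dx| ≤ 4/M`. -/
theorem stmt_14 (F F' : ℝ → ℝ) (a b M : ℝ) (hab : a ≤ b) (hM : 0 < M)
    (hderiv : ∀ x ∈ Set.Icc a b, HasDerivAt F (F' x) x)
    (hmono : MonotoneOn F' (Set.Icc a b) ∨ AntitoneOn F' (Set.Icc a b))
    (hbound : ∀ x ∈ Set.Icc a b, M ≤ |F' x|) :
    ‖∫ x in a..b, Complex.exp (I * (F x : ℂ))‖ ≤ 4 / M := by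
  have h24 : 2 / M ≤ 4 / M := by gcongr <;> norm_num
  have key : ∀ (G G' : ℝ → ℝ),
      (∀ x ∈ Set.Icc a b, HasDerivAt G (G' x) x) →
      (MonotoneOn G' (Set.Icc a b) ∨ AntitoneOn G' (Set.Icc a b)) →
      (∀ x ∈ Set.Icc a b, M ≤ G' x) →
      ‖∫ x in a..b, Complex.exp (I * (G x : ℂ))‖ ≤ 2 / M := by
    rintro G G' hd (hm | hm) hb
    · exact core_mono G G' a b M hab hM hd hm hb
    · exact core_anti G G' a b M hab hM hd hm hb
  rcases hasDerivWithinAt_forall_lt_or_forall_gt_of_forall_ne (convex_Icc a b)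
      (fun x hx => (hderiv x hx).hasDerivWithinAt) (m := 0)
      (fun x hx h0 => by
        have hb := hbound x hx
        rw [h0] at hb
        simp at hb
        linarith) with hneg | hpos
  · have hb' : ∀ x ∈ Set.Icc a b, M ≤ -F' x := by
      intro x hx
      have hB := hbound x hx
      rwa [abs_of_neg (hneg x hx)] at hB
    have hm' : MonotoneOn (fun x => -F' x) (Set.Icc a b)
        ∨ AntitoneOn (fun x => -F' x) (Set.Icc a b) := by
      rcases hmono with hm | hm
      · right; intro x hx y hy hxy; simpa using hm hx hy hxy
      · left; intro x hx y hy hxy; simpa using hm hx hy hxy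
    have hd' : ∀ x ∈ Set.Icc a b, HasDerivAt (fun y => -F y) (-F' x) x :=
      fun x hx => (hderiv x hx).neg
    have hk := key (fun y => -F y) (fun y => -F' y) hd' hm' hb'
    have := norm_int_exp_neg F a b
    rw [this] at hk
    exact hk.trans h24
  · have hb' : ∀ x ∈ Set.Icc a b, M ≤ F' x := by
      intro x hx
      have hB := hbound x hx
      rwa [abs_of_pos (hpos x hx)] at hB
    exact (key F F' hderiv hmono hb').trans h24
end

section
/- Let F be a twice differentiable real-valued function on [a, b] with |F''(x)| ≥ r > 0 for all x ∈ [a, b]. Then |∫_a^b e^{iF(x)} dx| ≤ 8/r^{1/2}. -/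
/-! Where `F'` is monotone and `|F'| ≥ λ`, integrating by parts against
`e^{iF} = (iF')⁻¹ (e^{iF})'` bounds the integral by `3/λ`: each boundary term is at most `1/λ`,
and the remaining integral is at most `∫ F''/F'² = 1/F'(c) - 1/F'(d) ≤ 1/λ`.
If `F'' ≥ r`, then `F'` grows at rate at least `r`, so `|F'| < √r` only on an interval of length
at most `2/√r`; bounding trivially there and by the first estimate on the two remaining intervals
gives `3/√r + 2/√r + 3/√r`. By Darboux's theorem `F''` has constant sign, and the case `F'' ≤ -r`
reduces to the previous one by complex conjugation. -/

open Complex intervalIntegral Set MeasureTheory ComplexConjugate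

theorem abs_inv_sub_inv_le {u v lam : ℝ} (hlam : 0 < lam) (huv : 0 < u * v)
    (hu : lam ≤ |u|) (hv : lam ≤ |v|) : |u⁻¹ - v⁻¹| ≤ lam⁻¹ := by
  have of_pos : ∀ u v : ℝ, lam ≤ u → lam ≤ v → |u⁻¹ - v⁻¹| ≤ lam⁻¹ := fun u v hu hv =>
    abs_sub_le_of_nonneg_of_le (inv_nonneg.2 (hlam.le.trans hu)) (inv_anti₀ hlam hu)
      (inv_nonneg.2 (hlam.le.trans hv)) (inv_anti₀ hlam hv)
  rcases pos_and_pos_or_neg_and_neg_of_mul_pos huv with ⟨hu0, hv0⟩ | ⟨hu0, hv0⟩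
  · rw [abs_of_pos hu0] at hu
    rw [abs_of_pos hv0] at hv
    exact of_pos u v hu hv
  · rw [abs_of_neg hu0] at hu
    rw [abs_of_neg hv0] at hv
    rw [abs_sub_comm]
    simpa only [inv_neg, neg_sub_neg] using of_pos (-u) (-v) hu hv

theorem ContinuousOn.mul_pos_of_forall_ne_zero {f : ℝ → ℝ} {c d : ℝ} (hcd : c ≤ d)
    (hf : ContinuousOn f (Icc c d)) (hne : ∀ x ∈ Icc c d, f x ≠ 0) : 0 < f c * f d := by
  by_contra! h
  have h0 : (0 : ℝ) ∈ uIcc (f c) (f d) := by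
    rcases mul_nonpos_iff.1 h with h | h
    · exact mem_uIcc.2 (Or.inr ⟨h.2, h.1⟩)
    · exact mem_uIcc.2 (Or.inl h)
  obtain ⟨x, hx, hx0⟩ := intermediate_value_uIcc (by rwa [uIcc_of_le hcd]) h0
  exact hne x (uIcc_of_le hcd ▸ hx) hx0

theorem norm_integral_mul_deriv_le {u v u' v' : ℝ → ℂ} {c d : ℝ} (hcd : c ≤ d)
    (hu : ∀ x ∈ Icc c d, HasDerivAt u (u' x) x) (hv : ∀ x ∈ Icc c d, HasDerivAt v (v' x) x)
    (hu' : IntervalIntegrable u' volume c d) (hv' : IntervalIntegrable v' volume c d) :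
    ‖∫ x in c..d, u x * v' x‖ ≤ ‖u d‖ * ‖v d‖ + ‖u c‖ * ‖v c‖ + ∫ x in c..d, ‖u' x‖ * ‖v x‖ := by
  rw [← uIcc_of_le hcd] at hu hv
  rw [integral_mul_deriv_eq_deriv_mul hu hv hu' hv', ← norm_mul, ← norm_mul]
  refine (norm_sub_le _ _).trans (add_le_add (norm_sub_le _ _) ?_)
  simpa only [norm_mul] using
    intervalIntegral.norm_integral_le_integral_norm (f := fun x => u' x * v x) (μ := volume) hcd

theorem integral_cexp_I_mul_neg (F : ℝ → ℝ) (a b : ℝ) :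
    ∫ x in a..b, cexp (I * ((-F x : ℝ) : ℂ)) = conj (∫ x in a..b, cexp (I * F x)) := by
  rw [← intervalIntegral_conj]
  refine integral_congr fun x _ => ?_
  rw [← exp_conj]
  simp

theorem hasDerivAt_neg_inv {f : ℝ → ℝ} {f' x : ℝ} (hf : HasDerivAt f f' x) (hx : f x ≠ 0) :
    HasDerivAt (fun y => -(f y)⁻¹) (f' / f x ^ 2) x :=
  (hf.inv hx).neg.congr_deriv (by ring)

theorem norm_integral_cexp_le_of_deriv_ne_zero {F F' F'' : ℝ → ℝ} {c d : ℝ} (hcd : c ≤ d)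
    (hF : ∀ x ∈ Icc c d, HasDerivAt F (F' x) x) (hF' : ∀ x ∈ Icc c d, HasDerivAt F' (F'' x) x)
    (hne : ∀ x ∈ Icc c d, F' x ≠ 0)
    (hint : IntervalIntegrable (fun x => F'' x / F' x ^ 2) volume c d) :
    ‖∫ x in c..d, cexp (I * F x)‖
      ≤ |F' d|⁻¹ + |F' c|⁻¹ + ∫ x in c..d, |F'' x| / F' x ^ 2 := by
  set u : ℝ → ℂ := fun y => I * ((-(F' y)⁻¹ : ℝ) : ℂ)
  have hu : ∀ x ∈ Icc c d, HasDerivAt u (I * ((F'' x / F' x ^ 2 : ℝ) : ℂ)) x := fun x hx =>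
    (hasDerivAt_neg_inv (hF' x hx) (hne x hx)).ofReal_comp.const_mul I
  have hu'_int : IntervalIntegrable (fun x => I * ((F'' x / F' x ^ 2 : ℝ) : ℂ)) volume c d :=
    (show IntervalIntegrable (fun x => ((F'' x / F' x ^ 2 : ℝ) : ℂ)) volume c d from
      ⟨hint.1.ofReal, hint.2.ofReal⟩).const_mul I
  have he : ∀ x ∈ Icc c d, HasDerivAt (fun y => cexp (I * F y)) (I * F' x * cexp (I * F x)) x :=
    fun x hx => by simpa [mul_comm] using (((hF x hx).ofReal_comp).const_mul I).cexp
  have he'_int : IntervalIntegrable (fun x => I * F' x * cexp (I * F x)) volume c d := by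
    have hF_cont := HasDerivAt.continuousOn hF
    have hF'_cont := HasDerivAt.continuousOn hF'
    exact ContinuousOn.intervalIntegrable_of_Icc hcd (by fun_prop)
  have hfactor : ∫ x in c..d, cexp (I * F x)
      = ∫ x in c..d, u x * (I * F' x * cexp (I * F x)) := by
    refine integral_congr fun x hx => ?_
    have : (F' x : ℂ) ≠ 0 := ofReal_ne_zero.2 (hne x (uIcc_of_le hcd ▸ hx))
    simp only [u, ofReal_neg, ofReal_inv]
    field_simp
    rw [I_sq]
    ring
  rw [hfactor]
  convert norm_integral_mul_deriv_le hcd hu he hu'_int he'_int using 2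
  all_goals simp [u, norm_exp_I_mul_ofReal]

theorem norm_integral_cexp_le_of_le_abs_deriv {F F' F'' : ℝ → ℝ} {c d lam : ℝ} (hcd : c ≤ d)
    (hlam : 0 < lam) (hF : ∀ x ∈ Icc c d, HasDerivAt F (F' x) x)
    (hF' : ∀ x ∈ Icc c d, HasDerivAt F' (F'' x) x) (hF''_nonneg : ∀ x ∈ Icc c d, 0 ≤ F'' x)
    (hlam_le : ∀ x ∈ Icc c d, lam ≤ |F' x|) :
    ‖∫ x in c..d, cexp (I * F x)‖ ≤ 3 / lam := by
  have hne : ∀ x ∈ Icc c d, F' x ≠ 0 := fun x hx h0 => by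
    simpa [h0] using hlam.trans_le (hlam_le x hx)
  have hg : ∀ x ∈ uIcc c d, HasDerivAt (fun y => -(F' y)⁻¹) (F'' x / F' x ^ 2) x :=
    fun x hx => by
      rw [uIcc_of_le hcd] at hx
      exact hasDerivAt_neg_inv (hF' x hx) (hne x hx)
  have hint : IntervalIntegrable (fun x => F'' x / F' x ^ 2) volume c d := by
    refine intervalIntegrable_deriv_of_nonneg (HasDerivAt.continuousOn hg)
      (fun x hx => hg x (Ioo_subset_Icc_self hx)) fun x hx => ?_
    rw [min_eq_left hcd, max_eq_right hcd] at hx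
    exact div_nonneg (hF''_nonneg x (Ioo_subset_Icc_self hx)) (sq_nonneg _)
  have hc : c ∈ Icc c d := left_mem_Icc.2 hcd
  have hd : d ∈ Icc c d := right_mem_Icc.2 hcd
  calc ‖∫ x in c..d, cexp (I * F x)‖
      ≤ |F' d|⁻¹ + |F' c|⁻¹ + ∫ x in c..d, |F'' x| / F' x ^ 2 :=
        norm_integral_cexp_le_of_deriv_ne_zero hcd hF hF' hne hint
    _ = |F' d|⁻¹ + |F' c|⁻¹ + ((F' c)⁻¹ - (F' d)⁻¹) := by
        rw [integral_congr fun x hx => by rw [abs_of_nonneg (hF''_nonneg x (uIcc_of_le hcd ▸ hx))],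
          integral_eq_sub_of_hasDerivAt hg hint]
        ring
    _ ≤ lam⁻¹ + lam⁻¹ + lam⁻¹ := by
        gcongr
        · exact hlam_le d hd
        · exact hlam_le c hc
        · refine (le_abs_self _).trans (abs_inv_sub_inv_le hlam ?_ (hlam_le c hc) (hlam_le d hd))
          exact (HasDerivAt.continuousOn hF').mul_pos_of_forall_ne_zero hcd hne
    _ = 3 / lam := by ring

theorem norm_integral_cexp_le_of_le_abs_deriv_Ioo {F F' F'' : ℝ → ℝ} {c d lam : ℝ} (hcd : c ≤ d)
    (hlam : 0 < lam) (hF : ∀ x ∈ Icc c d, HasDerivAt F (F' x) x)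
    (hF' : ∀ x ∈ Icc c d, HasDerivAt F' (F'' x) x) (hF''_nonneg : ∀ x ∈ Icc c d, 0 ≤ F'' x)
    (hlam_le : ∀ x ∈ Ioo c d, lam ≤ |F' x|) :
    ‖∫ x in c..d, cexp (I * F x)‖ ≤ 3 / lam := by
  rcases hcd.eq_or_lt with rfl | hcd
  · simp only [integral_same, norm_zero]
    positivity
  refine norm_integral_cexp_le_of_le_abs_deriv hcd.le hlam hF hF' hF''_nonneg fun x hx => ?_
  have hF'_cont := HasDerivAt.continuousOn hF'
  exact ContinuousWithinAt.closure_le (f := fun _ => lam) (g := fun y => |F' y|)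
    (closure_Ioo hcd.ne ▸ hx) continuousWithinAt_const
    ((hF'_cont x hx).abs.mono Ioo_subset_Icc_self) hlam_le

theorem exists_crossing_of_mul_sub_le_sub {g : ℝ → ℝ} {a b r : ℝ} (hab : a ≤ b)
    (hg : ContinuousOn g (Icc a b))
    (hslope : ∀ x ∈ Icc a b, ∀ y ∈ Icc a b, x ≤ y → r * (y - x) ≤ g y - g x) :
    ∃ c ∈ Icc a b, (∀ x ∈ Ico a c, g x ≤ r * (x - c)) ∧ ∀ x ∈ Ioc c b, r * (x - c) ≤ g x := by
  have ha : a ∈ Icc a b := left_mem_Icc.2 hab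
  have hb : b ∈ Icc a b := right_mem_Icc.2 hab
  rcases le_or_gt 0 (g a) with hga | hga
  · refine ⟨a, ha, fun x hx => absurd hx.2 hx.1.not_gt, fun x hx => ?_⟩
    linarith [hslope a ha x (Ioc_subset_Icc_self hx) hx.1.le]
  rcases le_or_gt (g b) 0 with hgb | hgb
  · refine ⟨b, hb, fun x hx => ?_, fun x hx => absurd hx.2 hx.1.not_ge⟩
    linarith [hslope x (Ico_subset_Icc_self hx) b hb hx.2.le]
  obtain ⟨c, hc, hgc⟩ := intermediate_value_Icc hab hg ⟨hga.le, hgb.le⟩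
  refine ⟨c, hc, fun x hx => ?_, fun x hx => ?_⟩
  · linarith [hslope x ⟨hx.1, hx.2.le.trans hc.2⟩ c hc hx.2.le]
  · linarith [hslope c hc x ⟨hc.1.trans hx.1.le, hx.2⟩ hx.1.le]

theorem norm_integral_cexp_le_of_le_abs_deriv_off_Ioo {F F' F'' : ℝ → ℝ} {a b c₁ c₂ lam : ℝ}
    (hac₁ : a ≤ c₁) (hc₁₂ : c₁ ≤ c₂) (hc₂b : c₂ ≤ b) (hlam : 0 < lam)
    (hF : ∀ x ∈ Icc a b, HasDerivAt F (F' x) x) (hF' : ∀ x ∈ Icc a b, HasDerivAt F' (F'' x) x)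
    (hF''_nonneg : ∀ x ∈ Icc a b, 0 ≤ F'' x) (hleft : ∀ x ∈ Ioo a c₁, lam ≤ |F' x|)
    (hright : ∀ x ∈ Ioo c₂ b, lam ≤ |F' x|) :
    ‖∫ x in a..b, cexp (I * F x)‖ ≤ 3 / lam + (c₂ - c₁) + 3 / lam := by
  have hsub : ∀ {u v}, a ≤ u → v ≤ b → Icc u v ⊆ Icc a b := Icc_subset_Icc
  have hpiece : ∀ u v, a ≤ u → u ≤ v → v ≤ b → (∀ x ∈ Ioo u v, lam ≤ |F' x|) →
      ‖∫ x in u..v, cexp (I * F x)‖ ≤ 3 / lam := fun u v hau huv hvb hlam_le =>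
    norm_integral_cexp_le_of_le_abs_deriv_Ioo huv hlam (fun x hx => hF x (hsub hau hvb hx))
      (fun x hx => hF' x (hsub hau hvb hx)) (fun x hx => hF''_nonneg x (hsub hau hvb hx)) hlam_le
  have hint : ∀ u v, a ≤ u → u ≤ v → v ≤ b →
      IntervalIntegrable (fun x => cexp (I * F x)) volume u v := by
    have hF_cont := HasDerivAt.continuousOn hF
    exact fun u v hau huv hvb => ContinuousOn.intervalIntegrable_of_Icc huv
      ((show ContinuousOn (fun x => cexp (I * F x)) (Icc a b) by fun_prop).mono (hsub hau hvb))
  have hac₂ := hac₁.trans hc₁₂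
  calc ‖∫ x in a..b, cexp (I * F x)‖
      = ‖(∫ x in a..c₁, cexp (I * F x)) + (∫ x in c₁..c₂, cexp (I * F x))
          + ∫ x in c₂..b, cexp (I * F x)‖ := by
        rw [integral_add_adjacent_intervals (hint _ _ le_rfl hac₁ (hc₁₂.trans hc₂b))
          (hint _ _ hac₁ hc₁₂ hc₂b), integral_add_adjacent_intervals
          (hint _ _ le_rfl hac₂ hc₂b) (hint _ _ hac₂ hc₂b le_rfl)]
    _ ≤ ‖∫ x in a..c₁, cexp (I * F x)‖ + ‖∫ x in c₁..c₂, cexp (I * F x)‖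
          + ‖∫ x in c₂..b, cexp (I * F x)‖ := norm_add₃_le
    _ ≤ 3 / lam + (c₂ - c₁) + 3 / lam := by
        gcongr ?_ + ?_ + ?_
        · exact hpiece a c₁ le_rfl hac₁ (hc₁₂.trans hc₂b) hleft
        · simpa [abs_of_nonneg (sub_nonneg.2 hc₁₂)] using
            norm_integral_le_of_norm_le_const (a := c₁) (b := c₂) fun x _ =>
              (norm_exp_I_mul_ofReal (F x)).le
        · exact hpiece c₂ b hac₂ hc₂b le_rfl hright

theorem norm_integral_cexp_le_of_le_deriv2 {F F' F'' : ℝ → ℝ} {a b r : ℝ} (hab : a ≤ b)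
    (hr : 0 < r) (hF : ∀ x ∈ Icc a b, HasDerivAt F (F' x) x)
    (hF' : ∀ x ∈ Icc a b, HasDerivAt F' (F'' x) x) (hr_le : ∀ x ∈ Icc a b, r ≤ F'' x) :
    ‖∫ x in a..b, cexp (I * F x)‖ ≤ 8 / √r := by
  set s := √r
  have hs : 0 < s := Real.sqrt_pos.2 hr
  have hs_inv : 0 < s⁻¹ := inv_pos.2 hs
  have hrs : r * s⁻¹ = s := by rw [← div_eq_mul_inv, Real.div_sqrt]
  have hF'_cont := HasDerivAt.continuousOn hF'
  have hslope : ∀ x ∈ Icc a b, ∀ y ∈ Icc a b, x ≤ y → r * (y - x) ≤ F' y - F' x :=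
    (convex_Icc a b).mul_sub_le_image_sub_of_le_deriv hF'_cont
      (fun x hx => (hF' x (interior_subset hx)).differentiableAt.differentiableWithinAt)
      fun x hx => (hF' x (interior_subset hx)).deriv ▸ hr_le x (interior_subset hx)
  obtain ⟨c, hc, hleft, hright⟩ := exists_crossing_of_mul_sub_le_sub hab hF'_cont hslope
  -- `|F'| ≥ s` off `(c - 1/s, c + 1/s)`
  set c₁ := max a (c - s⁻¹)
  set c₂ := min b (c + s⁻¹)
  have hc₁₂ : c₁ ≤ c₂ :=
    max_le (le_min hab (by linarith [hc.1])) (le_min (by linarith [hc.2]) (by linarith))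
  calc ‖∫ x in a..b, cexp (I * F x)‖
      ≤ 3 / s + (c₂ - c₁) + 3 / s := by
        refine norm_integral_cexp_le_of_le_abs_deriv_off_Ioo (le_max_left _ _) hc₁₂
          (min_le_left _ _) hs hF hF' (fun x hx => hr.le.trans (hr_le x hx)) (fun x hx => ?_)
          fun x hx => ?_
        · have hx_lt : x < c - s⁻¹ := (lt_max_iff.1 hx.2).resolve_left hx.1.not_gt
          have hline : r * (x - c) ≤ r * -s⁻¹ := mul_le_mul_of_nonneg_left (by linarith) hr.le
          rw [mul_neg, hrs] at hline
          exact le_abs.2 (Or.inr (by linarith [hleft x ⟨hx.1.le, by linarith⟩]))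
        · have hx_gt : c + s⁻¹ < x := (min_lt_iff.1 hx.1).resolve_left hx.2.not_gt
          have hline : r * s⁻¹ ≤ r * (x - c) := mul_le_mul_of_nonneg_left (by linarith) hr.le
          rw [hrs] at hline
          exact le_abs.2 (Or.inl (by linarith [hright x ⟨by linarith, hx.2.le⟩]))
    _ ≤ 3 / s + 2 * s⁻¹ + 3 / s := by
        gcongr
        linarith [le_max_right a (c - s⁻¹), min_le_right b (c + s⁻¹)]
    _ = 8 / s := by ring

/-- second derivative test: if `F` is twice differentiable on `[a,b]`
with `|F''(x)| ≥ r > 0`, then `|∫_a^b e^{iF(x)} dx| ≤ 8/√r`. -/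
theorem stmt_15 (F F' F'' : ℝ → ℝ) (a b r : ℝ) (hab : a ≤ b) (hr : 0 < r)
    (hderiv : ∀ x ∈ Set.Icc a b, HasDerivAt F (F' x) x)
    (hderiv' : ∀ x ∈ Set.Icc a b, HasDerivAt F' (F'' x) x)
    (hbound : ∀ x ∈ Set.Icc a b, r ≤ |F'' x|) :
    ‖∫ x in a..b, Complex.exp (I * (F x : ℂ))‖ ≤ 8 / Real.sqrt r := by
  have hF''_ne : ∀ x ∈ Icc a b, F'' x ≠ 0 := fun x hx h0 => by
    simpa [h0] using hr.trans_le (hbound x hx)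
  rcases hasDerivWithinAt_forall_lt_or_forall_gt_of_forall_ne (convex_Icc a b)
    (fun x hx => (hderiv' x hx).hasDerivWithinAt) hF''_ne with hneg | hpos
  · rw [← norm_conj, ← integral_cexp_I_mul_neg]
    exact norm_integral_cexp_le_of_le_deriv2 hab hr (fun x hx => (hderiv x hx).neg)
      (fun x hx => (hderiv' x hx).neg) fun x hx => by
        simpa [abs_of_neg (hneg x hx)] using hbound x hx
  · exact norm_integral_cexp_le_of_le_deriv2 hab hr hderiv hderiv' fun x hx => by
      simpa [abs_of_pos (hpos x hx)] using hbound x hx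
end
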